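/- arXiv:2404.13492 — 7 statements merged into one kernel-verified Lean document; each statement's English description precedes it below -/
import Mathlib

section
/- Let n ≥ 1 and α ∈ ℕ be such that the block moment matrix M_n^{(α)} is invertible. Then there exists a unique monic matrix polynomial P of degree n with ⟨P, x^i·I_p⟩_θ^α = 0 for all 0 ≤ i ≤ n−1, and there exists a unique monic matrix polynomial Q of degree n with ⟨x^i·I_p, Q⟩_θ^α = 0 for all 0 ≤ i ≤ n−1. -/
open MeasureTheory Polynomial Matrix Filter

/-- Evaluation of a matrix polynomial at a real scalar. -/
noncomputable def mpEval {p : ℕ} (f : Polynomial (Matrix (Fin p) (Fin p) ℝ)) (x : ℝ) :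
    Matrix (Fin p) (Fin p) ℝ :=
  f.sum fun k a => x ^ k • a

/-- The adjacent matrix-valued θ-deformed bilinear form
`⟨f, g⟩_θ^α = ∫ f(x) · x^α · W(x) · g(x^θ)ᵀ dx`, computed entrywise. -/
noncomputable def bform {p : ℕ} (θ : ℕ) (W : ℝ → Matrix (Fin p) (Fin p) ℝ) (α : ℕ)
    (f g : Polynomial (Matrix (Fin p) (Fin p) ℝ)) : Matrix (Fin p) (Fin p) ℝ :=
  Matrix.of fun i j => ∫ x : ℝ, (mpEval f x * (x ^ α • W x) * (mpEval g (x ^ θ))ᵀ) i j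

/-- A matrix polynomial is monic of degree `n`: the `x^n` coefficient is `I_p`
and all higher coefficients vanish. -/
def MonicDeg {p : ℕ} (f : Polynomial (Matrix (Fin p) (Fin p) ℝ)) (n : ℕ) : Prop :=
  f.coeff n = 1 ∧ ∀ k : ℕ, n < k → f.coeff k = 0

/-- The k-th moment `m_k = ∫ x^k W(x) dx`, computed entrywise. -/
noncomputable def mom {p : ℕ} (W : ℝ → Matrix (Fin p) (Fin p) ℝ) (k : ℕ) :
    Matrix (Fin p) (Fin p) ℝ :=
  Matrix.of fun i j => ∫ x : ℝ, x ^ k * W x i j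

/-- The block moment matrix `M_n^{(α)} = (m_{α+i+jθ})_{i,j=0}^{n-1}`, as an
`n × n` matrix over the ring of `p × p` real matrices. -/
noncomputable def momMat {p : ℕ} (θ : ℕ) (W : ℝ → Matrix (Fin p) (Fin p) ℝ) (n α : ℕ) :
    Matrix (Fin n) (Fin n) (Matrix (Fin p) (Fin p) ℝ) :=
  Matrix.of fun i j => mom W (α + (i : ℕ) + (j : ℕ) * θ)

/-! Writing `P = X ^ n + ∑_{k<n} c_k X ^ k` and `Q = X ^ n + ∑_{k<n} d_k X ^ k`, the
orthogonality relations `⟨P, X ^ i⟩_θ^α = 0` for `i < n` expand by bilinearity into the block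
linear system `c · M_n^{(α)} = -(m_{α+n+iθ})_i`, and `⟨X ^ i, Q⟩_θ^α = 0` into
`M_n^{(α)} · dᵀ = -(m_{α+i+nθ})_i`. Both have exactly one solution because `M_n^{(α)}` is a unit
of the (noncommutative) ring of block matrices. -/

section UnitMatrix

variable {ι R : Type*} [Fintype ι] [DecidableEq ι] [Semiring R] {M : Matrix ι ι R}

lemma existsUnique_vecMul_eq (hM : IsUnit M) (v : ι → R) : ∃! c, c ᵥ* M = v :=
  ⟨v ᵥ* ↑hM.unit⁻¹, by dsimp only; rw [vecMul_vecMul, hM.val_inv_mul, vecMul_one], fun c hc => by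
    rw [← hc, vecMul_vecMul, hM.mul_val_inv, vecMul_one]⟩

lemma existsUnique_mulVec_eq (hM : IsUnit M) (v : ι → R) : ∃! c, M *ᵥ c = v :=
  ⟨↑hM.unit⁻¹ *ᵥ v, by dsimp only; rw [mulVec_mulVec, hM.mul_val_inv, one_mulVec], fun c hc => by
    rw [← hc, mulVec_mulVec, hM.val_inv_mul, one_mulVec]⟩

end UnitMatrix

section MonicDeg

variable {p n : ℕ}

lemma MonicDeg.ext {P Q : Polynomial (Matrix (Fin p) (Fin p) ℝ)} (hP : MonicDeg P n)
    (hQ : MonicDeg Q n) (h : ∀ k < n, P.coeff k = Q.coeff k) : P = Q := by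
  ext1 k
  rcases lt_trichotomy k n with hk | rfl | hk
  · exact h k hk
  · rw [hP.1, hQ.1]
  · rw [hP.2 k hk, hQ.2 k hk]

lemma monicDeg_X_pow_add {q : Polynomial (Matrix (Fin p) (Fin p) ℝ)}
    (hq : q ∈ degreeLT _ n) : MonicDeg (X ^ n + q) n := by
  have hq_coeff : ∀ k, n ≤ k → q.coeff k = 0 := fun k hk =>
    coeff_eq_zero_of_degree_lt ((mem_degreeLT.1 hq).trans_le (by exact_mod_cast hk))
  refine ⟨by rw [coeff_add, coeff_X_pow_self, hq_coeff n le_rfl, add_zero], fun k hk => ?_⟩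
  rw [coeff_add, coeff_X_pow, if_neg hk.ne', hq_coeff k hk.le, add_zero]

/-- A monic polynomial of degree `n` is determined by its coefficients below `n`, and these
can be prescribed freely. -/
lemma existsUnique_monicDeg {O : Polynomial (Matrix (Fin p) (Fin p) ℝ) → Prop}
    {S : (Fin n → Matrix (Fin p) (Fin p) ℝ) → Prop}
    (hOS : ∀ P, MonicDeg P n → (O P ↔ S fun k => P.coeff k)) (hS : ∃! c, S c) :
    ∃! P, MonicDeg P n ∧ O P := by
  obtain ⟨c, hc, hc_unique⟩ := hS
  set q := (degreeLTEquiv (Matrix (Fin p) (Fin p) ℝ) n).symm c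
  have hP : MonicDeg (X ^ n + q.1) n := monicDeg_X_pow_add q.2
  have hlow : (fun k : Fin n => (X ^ n + q.1).coeff k) = c := by
    funext k
    rw [coeff_add, coeff_X_pow, if_neg k.is_lt.ne, zero_add]
    exact congrFun ((degreeLTEquiv _ n).apply_symm_apply c) k
  refine ⟨_, ⟨hP, (hOS _ hP).2 (hlow ▸ hc)⟩, fun P' ⟨hP', hO'⟩ => hP'.ext hP fun k hk => ?_⟩
  exact (congrFun (hc_unique _ ((hOS P' hP').1 hO')) ⟨k, hk⟩).trans (congrFun hlow ⟨k, hk⟩).symm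

end MonicDeg

section Moments

variable {p : ℕ} {W : ℝ → Matrix (Fin p) (Fin p) ℝ}

lemma pow_mul_mul_mul_apply_eq_sum (A B : Matrix (Fin p) (Fin p) ℝ) (m : ℕ) (x : ℝ)
    (i j : Fin p) :
    x ^ m * (A * W x * B) i j = ∑ b, ∑ a, A i a * B b j * (x ^ m * W x a b) := by
  simp only [mul_apply, Finset.sum_mul, Finset.mul_sum]
  exact Finset.sum_congr rfl fun b _ => Finset.sum_congr rfl fun a _ => by ring

lemma integrable_pow_mul_mul_mul_apply
    (hWint : ∀ (k : ℕ) (i j : Fin p), Integrable fun x : ℝ => x ^ k * W x i j)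
    (A B : Matrix (Fin p) (Fin p) ℝ) (m : ℕ) (i j : Fin p) :
    Integrable fun x : ℝ => x ^ m * (A * W x * B) i j := by
  simp_rw [pow_mul_mul_mul_apply_eq_sum]
  exact integrable_finsetSum _ fun b _ => integrable_finsetSum _ fun a _ =>
    (hWint m a b).const_mul _

lemma integral_pow_mul_mul_mul_apply
    (hWint : ∀ (k : ℕ) (i j : Fin p), Integrable fun x : ℝ => x ^ k * W x i j)
    (A B : Matrix (Fin p) (Fin p) ℝ) (m : ℕ) (i j : Fin p) :
    ∫ x : ℝ, x ^ m * (A * W x * B) i j = (A * mom W m * B) i j := by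
  simp_rw [pow_mul_mul_mul_apply_eq_sum]
  rw [integral_finsetSum _ fun b _ => integrable_finsetSum _ fun a _ =>
    (hWint m a b).const_mul _]
  simp only [mul_apply, Finset.sum_mul]
  refine Finset.sum_congr rfl fun b _ => ?_
  rw [integral_finsetSum _ fun a _ => (hWint m a b).const_mul _]
  refine Finset.sum_congr rfl fun a _ => ?_
  rw [integral_const_mul, mom, of_apply]
  ring

lemma mpEval_mul_smul_mul_transpose (θ α : ℕ) (f g : Polynomial (Matrix (Fin p) (Fin p) ℝ))
    (x : ℝ) :
    mpEval f x * (x ^ α • W x) * (mpEval g (x ^ θ))ᵀ =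
      f.sum fun k a => g.sum fun l b => x ^ (α + k + l * θ) • (a * W x * bᵀ) := by
  simp only [mpEval, Polynomial.sum_def, transpose_sum, transpose_smul, Finset.sum_mul,
    Finset.mul_sum, Finset.smul_sum, smul_mul_assoc, mul_smul_comm, smul_smul]
  rw [Finset.sum_comm]
  refine Finset.sum_congr rfl fun k _ => Finset.sum_congr rfl fun l _ => ?_
  rw [← pow_mul, ← pow_add, ← pow_add, mul_assoc]
  congr 2
  ring

lemma bform_eq_sum
    (hWint : ∀ (k : ℕ) (i j : Fin p), Integrable fun x : ℝ => x ^ k * W x i j)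
    (θ α : ℕ) (f g : Polynomial (Matrix (Fin p) (Fin p) ℝ)) :
    bform θ W α f g = f.sum fun k a => g.sum fun l b => a * mom W (α + k + l * θ) * bᵀ := by
  ext i j
  simp only [bform, of_apply, mpEval_mul_smul_mul_transpose, Polynomial.sum_def, Matrix.sum_apply,
    Matrix.smul_apply, smul_eq_mul]
  rw [integral_finsetSum _ fun k _ => integrable_finsetSum _ fun l _ =>
    integrable_pow_mul_mul_mul_apply hWint _ _ _ i j]
  refine Finset.sum_congr rfl fun k _ => ?_
  rw [integral_finsetSum _ fun l _ => integrable_pow_mul_mul_mul_apply hWint _ _ _ i j]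
  exact Finset.sum_congr rfl fun l _ => integral_pow_mul_mul_mul_apply hWint _ _ _ i j

end Moments

section Orthogonality

variable {p θ n α : ℕ} {W : ℝ → Matrix (Fin p) (Fin p) ℝ}

lemma bform_X_pow_right
    (hWint : ∀ (k : ℕ) (i j : Fin p), Integrable fun x : ℝ => x ^ k * W x i j)
    (f : Polynomial (Matrix (Fin p) (Fin p) ℝ)) (i : ℕ) :
    bform θ W α f (X ^ i) = f.sum fun k a => a * mom W (α + k + i * θ) := by
  rw [bform_eq_sum hWint, X_pow_eq_monomial]
  congr 1
  funext k a
  rw [sum_monomial_index _ _ (by simp), transpose_one, mul_one]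

lemma bform_X_pow_left
    (hWint : ∀ (k : ℕ) (i j : Fin p), Integrable fun x : ℝ => x ^ k * W x i j)
    (g : Polynomial (Matrix (Fin p) (Fin p) ℝ)) (i : ℕ) :
    bform θ W α (X ^ i) g = g.sum fun l b => mom W (α + i + l * θ) * bᵀ := by
  rw [bform_eq_sum hWint, X_pow_eq_monomial, sum_monomial_index _ _ (by simp [Polynomial.sum_def])]
  simp only [one_mul]

lemma MonicDeg.degree_lt_succ {P : Polynomial (Matrix (Fin p) (Fin p) ℝ)} (hP : MonicDeg P n) :
    P.degree < ↑(n + 1) :=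
  degree_lt_iff_coeff_zero _ _ |>.2 fun m hm => hP.2 m hm

lemma bform_X_pow_right_of_monicDeg
    (hWint : ∀ (k : ℕ) (i j : Fin p), Integrable fun x : ℝ => x ^ k * W x i j)
    {P : Polynomial (Matrix (Fin p) (Fin p) ℝ)} (hP : MonicDeg P n) (i : Fin n) :
    bform θ W α P (X ^ (i : ℕ)) =
      ((fun k : Fin n => P.coeff k) ᵥ* momMat θ W n α) i + mom W (α + n + i * θ) := by
  rw [bform_X_pow_right hWint, ← sum_fin _ (by simp) hP.degree_lt_succ, Fin.sum_univ_castSucc]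
  simp [hP.1, vecMul, dotProduct, momMat]

lemma bform_X_pow_left_of_monicDeg
    (hWint : ∀ (k : ℕ) (i j : Fin p), Integrable fun x : ℝ => x ^ k * W x i j)
    {Q : Polynomial (Matrix (Fin p) (Fin p) ℝ)} (hQ : MonicDeg Q n) (i : Fin n) :
    bform θ W α (X ^ (i : ℕ)) Q =
      (momMat θ W n α *ᵥ fun l : Fin n => (Q.coeff l)ᵀ) i + mom W (α + i + n * θ) := by
  rw [bform_X_pow_left hWint, ← sum_fin _ (by simp) hQ.degree_lt_succ, Fin.sum_univ_castSucc]
  simp [hQ.1, mulVec, dotProduct, momMat]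

lemma forall_bform_X_pow_right_eq_zero_iff
    (hWint : ∀ (k : ℕ) (i j : Fin p), Integrable fun x : ℝ => x ^ k * W x i j)
    {P : Polynomial (Matrix (Fin p) (Fin p) ℝ)} (hP : MonicDeg P n) :
    (∀ i < n, bform θ W α P (X ^ i) = 0) ↔
      (fun k : Fin n => P.coeff k) ᵥ* momMat θ W n α = -fun i : Fin n => mom W (α + n + i * θ) := by
  rw [funext_iff, Fin.forall_iff]
  refine forall₂_congr fun i hi => ?_
  rw [bform_X_pow_right_of_monicDeg hWint hP ⟨i, hi⟩, Pi.neg_apply, eq_neg_iff_add_eq_zero]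

lemma forall_bform_X_pow_left_eq_zero_iff
    (hWint : ∀ (k : ℕ) (i j : Fin p), Integrable fun x : ℝ => x ^ k * W x i j)
    {Q : Polynomial (Matrix (Fin p) (Fin p) ℝ)} (hQ : MonicDeg Q n) :
    (∀ i < n, bform θ W α (X ^ i) Q = 0) ↔
      (momMat θ W n α *ᵥ fun l : Fin n => (Q.coeff l)ᵀ) = -fun i : Fin n => mom W (α + i + n * θ) := by
  rw [funext_iff, Fin.forall_iff]
  refine forall₂_congr fun i hi => ?_
  rw [bform_X_pow_left_of_monicDeg hWint hQ ⟨i, hi⟩, Pi.neg_apply, eq_neg_iff_add_eq_zero]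

end Orthogonality

theorem statement1_general (p θ : ℕ)
    (W : ℝ → Matrix (Fin p) (Fin p) ℝ)
    (hWint : ∀ (k : ℕ) (i j : Fin p), Integrable fun x : ℝ => x ^ k * W x i j)
    (n α : ℕ)
    (hM : IsUnit (momMat θ W n α)) :
    (∃! P : Polynomial (Matrix (Fin p) (Fin p) ℝ),
        MonicDeg P n ∧ ∀ i < n, bform θ W α P (X ^ i) = 0) ∧
    (∃! Q : Polynomial (Matrix (Fin p) (Fin p) ℝ),
        MonicDeg Q n ∧ ∀ i < n, bform θ W α (X ^ i) Q = 0) := by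
  let transposeEquiv : (Fin n → Matrix (Fin p) (Fin p) ℝ) ≃ (Fin n → Matrix (Fin p) (Fin p) ℝ) :=
    Equiv.piCongrRight fun _ => (transposeAddEquiv (Fin p) (Fin p) ℝ).toEquiv
  exact ⟨existsUnique_monicDeg (fun _ hP => forall_bform_X_pow_right_eq_zero_iff hWint hP)
      (existsUnique_vecMul_eq hM _),
    existsUnique_monicDeg (fun _ hQ => forall_bform_X_pow_left_eq_zero_iff hWint hQ)
      (transposeEquiv.existsUnique_congr_right.2 (existsUnique_mulVec_eq hM _))⟩

/-- existence and uniqueness of monic bi-orthogonal matrix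
polynomials of degree `n`, given invertibility of the block moment matrix. -/
theorem statement1 (p θ : ℕ) (hp : 1 ≤ p) (hθ : 1 ≤ θ)
    (W : ℝ → Matrix (Fin p) (Fin p) ℝ)
    (hWmeas : ∀ i j : Fin p, Measurable fun x : ℝ => W x i j)
    (hWint : ∀ (k : ℕ) (i j : Fin p), Integrable fun x : ℝ => x ^ k * W x i j)
    (n α : ℕ) (hn : 1 ≤ n)
    (hM : IsUnit (momMat θ W n α)) :
    (∃! P : Polynomial (Matrix (Fin p) (Fin p) ℝ),
        MonicDeg P n ∧ ∀ i < n, bform θ W α P (X ^ i) = 0) ∧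
    (∃! Q : Polynomial (Matrix (Fin p) (Fin p) ℝ),
        MonicDeg Q n ∧ ∀ i < n, bform θ W α (X ^ i) Q = 0) :=
  statement1_general p θ W hWint n α hM
end

section
/- Let n ≥ 1 and α ∈ ℕ be such that M_n^{(α)} is invertible (as a matrix over the ring of p×p real matrices, with blockwise inverse ((M_n^{(α)})^{−1})_{k,j}), and let P_n^{(α)} be the unique monic degree-n matrix polynomial with ⟨P_n^{(α)}, x^i·I_p⟩_θ^α = 0 for 0 ≤ i ≤ n−1. Then the normalization factor H_n^{(α)} := ⟨P_n^{(α)}, x^n·I_p⟩_θ^α is given by the Hankel quasi-determinant (Schur complement) formula H_n^{(α)} = m_{α+n+nθ} − Σ_{k=0}^{n−1} Σ_{j=0}^{n−1} m_{α+n+kθ}·((M_n^{(α)})^{−1})_{k,j}·m_{α+j+nθ}. -/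
open MeasureTheory Polynomial Matrix Filter

lemma mpEval_X_pow {p : ℕ} (m : ℕ) (x : ℝ) :
    mpEval (p := p) (X ^ m) x = x ^ m • 1 := by
  rw [mpEval, Polynomial.X_pow_eq_monomial, Polynomial.sum_monomial_index]
  simp

lemma integA_int {p : ℕ} (W : ℝ → Matrix (Fin p) (Fin p) ℝ)
    (hWint : ∀ (k : ℕ) (i j : Fin p), Integrable fun x : ℝ => x ^ k * W x i j)
    (A : Matrix (Fin p) (Fin p) ℝ) (m : ℕ) (i j : Fin p) :
    Integrable fun x : ℝ => x ^ m * (A * W x) i j := by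
  have h1 : ∀ x : ℝ, x ^ m * (A * W x) i j = ∑ l, A i l * (x ^ m * W x l j) := by
    intro x
    rw [Matrix.mul_apply, Finset.mul_sum]
    exact Finset.sum_congr rfl fun l _ => by ring
  simp only [h1]
  exact integrable_finset_sum _ fun l _ => (hWint m l j).const_mul _

lemma integA_eq {p : ℕ} (W : ℝ → Matrix (Fin p) (Fin p) ℝ)
    (hWint : ∀ (k : ℕ) (i j : Fin p), Integrable fun x : ℝ => x ^ k * W x i j)
    (A : Matrix (Fin p) (Fin p) ℝ) (m : ℕ) (i j : Fin p) :
    ∫ x : ℝ, x ^ m * (A * W x) i j = (A * mom W m) i j := by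
  have h1 : ∀ x : ℝ, x ^ m * (A * W x) i j = ∑ l, A i l * (x ^ m * W x l j) := by
    intro x
    rw [Matrix.mul_apply, Finset.mul_sum]
    exact Finset.sum_congr rfl fun l _ => by ring
  simp only [h1]
  rw [integral_finset_sum _ fun l _ => (hWint m l j).const_mul _]
  rw [Matrix.mul_apply]
  exact Finset.sum_congr rfl fun l _ => by
    rw [MeasureTheory.integral_const_mul]; rfl

lemma key_matrix {p : ℕ} (θ : ℕ) (W : ℝ → Matrix (Fin p) (Fin p) ℝ) (α m : ℕ)
    (f : Polynomial (Matrix (Fin p) (Fin p) ℝ)) (x : ℝ) :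
    mpEval f x * (x ^ α • W x) * (mpEval (X ^ m) (x ^ θ))ᵀ
      = ∑ k ∈ f.support, x ^ (α + k + m * θ) • (f.coeff k * W x) := by
  rw [mpEval_X_pow]
  have hf : mpEval f x = ∑ k ∈ f.support, x ^ k • f.coeff k := rfl
  rw [hf, Matrix.transpose_smul, Matrix.transpose_one, Matrix.mul_smul, Matrix.mul_one,
    Matrix.mul_smul, Finset.sum_mul]
  rw [Finset.smul_sum, Finset.smul_sum]
  refine Finset.sum_congr rfl fun k _ => ?_
  rw [Matrix.smul_mul, smul_smul, smul_smul]
  congr 1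
  rw [← pow_mul, ← pow_add, ← pow_add]
  ring_nf

lemma bform_X_pow {p : ℕ} (θ : ℕ) (W : ℝ → Matrix (Fin p) (Fin p) ℝ)
    (hWint : ∀ (k : ℕ) (i j : Fin p), Integrable fun x : ℝ => x ^ k * W x i j)
    (α m : ℕ) (f : Polynomial (Matrix (Fin p) (Fin p) ℝ)) :
    bform θ W α f (X ^ m) = ∑ k ∈ f.support, f.coeff k * mom W (α + k + m * θ) := by
  have h : ∀ x : ℝ, mpEval f x * (x ^ α • W x) * (mpEval (X ^ m) (x ^ θ))ᵀ
      = ∑ k ∈ f.support, x ^ (α + k + m * θ) • (f.coeff k * W x) :=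
    key_matrix θ W α m f
  ext i j
  simp only [bform, Matrix.of_apply, h, Matrix.sum_apply, Matrix.smul_apply, smul_eq_mul]
  rw [integral_finset_sum _ fun k _ => integA_int W hWint _ _ i j]
  exact Finset.sum_congr rfl fun k _ => integA_eq W hWint _ _ i j

lemma bform_X_pow' {p : ℕ} (θ : ℕ) (W : ℝ → Matrix (Fin p) (Fin p) ℝ)
    (hWint : ∀ (k : ℕ) (i j : Fin p), Integrable fun x : ℝ => x ^ k * W x i j)
    (α m n : ℕ) (f : Polynomial (Matrix (Fin p) (Fin p) ℝ)) (hf : MonicDeg f n) :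
    bform θ W α f (X ^ m)
      = mom W (α + n + m * θ) + ∑ k : Fin n, f.coeff k * mom W (α + k + m * θ) := by
  rw [bform_X_pow θ W hWint α m f]
  have hsub : f.support ⊆ Finset.range (n + 1) := by
    intro k hk
    rw [Finset.mem_range]
    by_contra h
    exact (Polynomial.mem_support_iff.mp hk) (hf.2 k (by omega))
  rw [Finset.sum_subset hsub (fun k _ hk => by
    rw [Polynomial.notMem_support_iff.mp hk, zero_mul])]
  rw [Finset.sum_range_succ, hf.1, one_mul, add_comm, Finset.sum_range]

/-- Hankel quasi-determinant (Schur complement) formula for the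
normalization factor `H_n^{(α)} = ⟨P_n^{(α)}, x^n·I_p⟩_θ^α`. -/
theorem statement4 (p θ : ℕ) (hp : 1 ≤ p) (hθ : 1 ≤ θ)
    (W : ℝ → Matrix (Fin p) (Fin p) ℝ)
    (hWmeas : ∀ i j : Fin p, Measurable fun x : ℝ => W x i j)
    (hWint : ∀ (k : ℕ) (i j : Fin p), Integrable fun x : ℝ => x ^ k * W x i j)
    (n α : ℕ) (hn : 1 ≤ n)
    (Minv : Matrix (Fin n) (Fin n) (Matrix (Fin p) (Fin p) ℝ))
    (hMinv₁ : momMat θ W n α * Minv = 1) (hMinv₂ : Minv * momMat θ W n α = 1)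
    (P : Polynomial (Matrix (Fin p) (Fin p) ℝ))
    (hPmonic : MonicDeg P n)
    (hPorth : ∀ i < n, bform θ W α P (X ^ i) = 0) :
    bform θ W α P (X ^ n)
      = mom W (α + n + n * θ)
        - ∑ k : Fin n, ∑ j : Fin n,
            mom W (α + n + (k : ℕ) * θ) * Minv k j * mom W (α + (j : ℕ) + n * θ) := by
  -- orthogonality relations: for each i : Fin n,
  -- ∑ k, P.coeff k * momMat k i = - mom W (α + n + i*θ)
  have horth : ∀ i : Fin n,
      ∑ k : Fin n, P.coeff k * momMat θ W n α k i = -(mom W (α + n + (i : ℕ) * θ)) := by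
    intro i
    have h := hPorth i i.2
    rw [bform_X_pow' θ W hWint α i n P hPmonic] at h
    have h' : ∑ k : Fin n, P.coeff k * mom W (α + (k : ℕ) + (i : ℕ) * θ)
        = -(mom W (α + n + (i : ℕ) * θ)) :=
      eq_neg_of_add_eq_zero_left (by rw [add_comm]; exact h)
    simpa [momMat] using h'
  -- solve for coefficients
  have hcoeff : ∀ j : Fin n,
      P.coeff j = -∑ k : Fin n, mom W (α + n + (k : ℕ) * θ) * Minv k j := by
    intro j
    have h1 : ∀ k : Fin n, (momMat θ W n α * Minv) k j
        = ∑ i : Fin n, momMat θ W n α k i * Minv i j := fun k => Matrix.mul_apply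
    have h2 : P.coeff j = ∑ k : Fin n, P.coeff k * (momMat θ W n α * Minv) k j := by
      rw [hMinv₁]
      simp [Matrix.one_apply, Finset.sum_ite_eq]
    rw [h2]
    simp only [h1, Finset.mul_sum]
    rw [Finset.sum_comm]
    rw [← Finset.sum_neg_distrib]
    refine Finset.sum_congr rfl fun i _ => ?_
    simp only [← mul_assoc]
    rw [← Finset.sum_mul, horth i, neg_mul]
  rw [bform_X_pow' θ W hWint α n n P hPmonic]
  rw [sub_eq_add_neg]
  congr 1
  calc ∑ j : Fin n, P.coeff (j : ℕ) * mom W (α + (j : ℕ) + n * θ)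
      = ∑ j : Fin n, -(∑ k : Fin n,
          mom W (α + n + (k : ℕ) * θ) * Minv k j * mom W (α + (j : ℕ) + n * θ)) := by
        refine Finset.sum_congr rfl fun j _ => ?_
        rw [hcoeff j, neg_mul, Finset.sum_mul]
    _ = -∑ k : Fin n, ∑ j : Fin n,
          mom W (α + n + (k : ℕ) * θ) * Minv k j * mom W (α + (j : ℕ) + n * θ) := by
        rw [Finset.sum_neg_distrib, Finset.sum_comm]
end

section
/- (Christoffel transformation for the Q-family.) For every n ∈ ℕ and α ∈ ℕ: x·Q_n^{(α+θ)}(x) = Q_{n+1}^{(α)}(x) + q_{n+1}^{(α)}·Q_n^{(α)}(x), where q_{n+1}^{(α)} is determined by (q_{n+1}^{(α)})^⊤ := (H_n^{(α)})^{−1}·H_n^{(α+θ)}. -/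
open MeasureTheory Polynomial Matrix Filter

section aux
variable {p : ℕ} (W : ℝ → Matrix (Fin p) (Fin p) ℝ)
  (hWint : ∀ (k : ℕ) (i j : Fin p), Integrable fun x : ℝ => x ^ k * W x i j)

lemma entry_expand (m : ℕ) (A B : Matrix (Fin p) (Fin p) ℝ) (i j : Fin p) (x : ℝ) :
    x ^ m * ((A * W x * B) i j) = ∑ t : Fin p, ∑ s : Fin p, A i s * B t j * (x ^ m * W x s t) := by
  simp only [Matrix.mul_apply, Finset.sum_mul, Finset.mul_sum]
  exact Finset.sum_congr rfl fun t _ => Finset.sum_congr rfl fun s _ => by ring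

include hWint in
lemma integrable_aux (m : ℕ) (A B : Matrix (Fin p) (Fin p) ℝ) (i j : Fin p) :
    Integrable fun x : ℝ => x ^ m * ((A * W x * B) i j) := by
  have h : (fun x : ℝ => x ^ m * ((A * W x * B) i j))
      = fun x => ∑ t : Fin p, ∑ s : Fin p, A i s * B t j * (x ^ m * W x s t) := by
    funext x; exact entry_expand W m A B i j x
  rw [h]
  exact integrable_finset_sum _ fun t _ => integrable_finset_sum _ fun s _ =>
    ((hWint m s t).const_mul _)

include hWint in
lemma integral_aux (m : ℕ) (A B : Matrix (Fin p) (Fin p) ℝ) (i j : Fin p) :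
    ∫ x : ℝ, x ^ m * ((A * W x * B) i j) = (A * mom W m * B) i j := by
  have h : (fun x : ℝ => x ^ m * ((A * W x * B) i j))
      = fun x => ∑ t : Fin p, ∑ s : Fin p, A i s * B t j * (x ^ m * W x s t) := by
    funext x; exact entry_expand W m A B i j x
  rw [h, integral_finset_sum _ fun t _ => integrable_finset_sum _ fun s _ =>
    ((hWint m s t).const_mul _)]
  have : ∀ t : Fin p, (∫ x : ℝ, ∑ s : Fin p, A i s * B t j * (x ^ m * W x s t))
      = ∑ s : Fin p, A i s * B t j * (mom W m s t) := by
    intro t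
    rw [integral_finset_sum _ fun s _ => ((hWint m s t).const_mul _)]
    exact Finset.sum_congr rfl fun s _ => by rw [integral_const_mul]; rfl
  simp only [this]
  simp only [Matrix.mul_apply, Finset.sum_mul, Finset.mul_sum]
  refine Finset.sum_congr rfl fun t _ => Finset.sum_congr rfl fun s _ => by ring

end aux

section expand
variable {p : ℕ} (θ : ℕ) (W : ℝ → Matrix (Fin p) (Fin p) ℝ)
  (hWint : ∀ (k : ℕ) (i j : Fin p), Integrable fun x : ℝ => x ^ k * W x i j)

lemma mpEval_sum_range (f : Polynomial (Matrix (Fin p) (Fin p) ℝ)) {N : ℕ}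
    (hN : f.natDegree < N) (x : ℝ) :
    mpEval f x = ∑ k ∈ Finset.range N, x ^ k • f.coeff k :=
  Polynomial.sum_over_range' f (fun _ => smul_zero _) N hN

lemma integrand_expand (α : ℕ) (f g : Polynomial (Matrix (Fin p) (Fin p) ℝ)) {N M : ℕ}
    (hN : f.natDegree < N) (hM : g.natDegree < M) (x : ℝ) :
    mpEval f x * (x ^ α • W x) * (mpEval g (x ^ θ))ᵀ
      = ∑ k ∈ Finset.range N, ∑ l ∈ Finset.range M,
          x ^ (α + k + l * θ) • (f.coeff k * W x * (g.coeff l)ᵀ) := by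
  rw [mpEval_sum_range f hN, mpEval_sum_range g hM]
  rw [Matrix.transpose_sum]
  simp only [Matrix.transpose_smul]
  rw [Finset.sum_mul, Finset.sum_mul]
  refine Finset.sum_congr rfl fun k _ => ?_
  rw [Finset.mul_sum]
  refine Finset.sum_congr rfl fun l _ => ?_
  simp only [smul_mul_assoc, mul_smul_comm, smul_smul]
  congr 1
  ring

include hWint in
lemma bform_eq (α : ℕ) (f g : Polynomial (Matrix (Fin p) (Fin p) ℝ)) {N M : ℕ}
    (hN : f.natDegree < N) (hM : g.natDegree < M) :
    bform θ W α f g = ∑ k ∈ Finset.range N, ∑ l ∈ Finset.range M,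
        f.coeff k * (mom W (α + k + l * θ) * (g.coeff l)ᵀ) := by
  ext i j
  show (∫ x : ℝ, (mpEval f x * (x ^ α • W x) * (mpEval g (x ^ θ))ᵀ) i j) = _
  have h1 : (fun x : ℝ => (mpEval f x * (x ^ α • W x) * (mpEval g (x ^ θ))ᵀ) i j)
      = fun x => ∑ k ∈ Finset.range N, ∑ l ∈ Finset.range M,
          x ^ (α + k + l * θ) * ((f.coeff k * W x * (g.coeff l)ᵀ) i j) := by
    funext x
    rw [integrand_expand θ W α f g hN hM x]
    simp [Matrix.sum_apply]
  rw [h1, integral_finset_sum _ fun k _ => integrable_finset_sum _ fun l _ =>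
    integrable_aux W hWint _ _ _ i j]
  simp only [Matrix.sum_apply]
  refine Finset.sum_congr rfl fun k _ => ?_
  rw [integral_finset_sum _ fun l _ => integrable_aux W hWint _ _ _ i j]
  refine Finset.sum_congr rfl fun l _ => ?_
  rw [integral_aux W hWint (α + k + l * θ) (f.coeff k) ((g.coeff l)ᵀ) i j, Matrix.mul_assoc]

end expand

section derived
variable {p : ℕ} (θ : ℕ) (W : ℝ → Matrix (Fin p) (Fin p) ℝ)
  (hWint : ∀ (k : ℕ) (i j : Fin p), Integrable fun x : ℝ => x ^ k * W x i j)

include hWint in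
lemma bform_Xi (α i : ℕ) (g : Polynomial (Matrix (Fin p) (Fin p) ℝ)) {M : ℕ}
    (hM : g.natDegree < M) :
    bform θ W α (X ^ i) g = ∑ l ∈ Finset.range M, mom W (α + i + l * θ) * (g.coeff l)ᵀ := by
  rw [bform_eq θ W hWint α (X ^ i) g (Nat.lt_succ_of_le (Polynomial.natDegree_X_pow_le i)) hM]
  rw [Finset.sum_eq_single i]
  · refine Finset.sum_congr rfl fun l _ => ?_
    rw [Polynomial.coeff_X_pow, if_pos rfl, one_mul]
  · intro k _ hk
    simp [Polynomial.coeff_X_pow, hk]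
  · intro h
    exact absurd (Finset.self_mem_range_succ i) h

include hWint in
lemma bform_left_expand (α : ℕ) (f g : Polynomial (Matrix (Fin p) (Fin p) ℝ)) {N M : ℕ}
    (hN : f.natDegree < N) (hM : g.natDegree < M) :
    bform θ W α f g = ∑ k ∈ Finset.range N, f.coeff k * bform θ W α (X ^ k) g := by
  rw [bform_eq θ W hWint α f g hN hM]
  refine Finset.sum_congr rfl fun k _ => ?_
  rw [bform_Xi θ W hWint α k g hM, Finset.mul_sum]

include hWint in
lemma bform_right_expand (α : ℕ) (f g : Polynomial (Matrix (Fin p) (Fin p) ℝ)) {N M : ℕ}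
    (hN : f.natDegree < N) (hM : g.natDegree < M) :
    bform θ W α f g = ∑ l ∈ Finset.range M, bform θ W α f (X ^ l) * (g.coeff l)ᵀ := by
  rw [bform_eq θ W hWint α f g hN hM, Finset.sum_comm]
  refine Finset.sum_congr rfl fun l _ => ?_
  have hXl : bform θ W α f (X ^ l) = ∑ k ∈ Finset.range N, f.coeff k * mom W (α + k + l * θ) := by
    rw [bform_eq θ W hWint α f (X ^ l) hN (Nat.lt_succ_of_le (Polynomial.natDegree_X_pow_le l))]
    refine Finset.sum_congr rfl fun k _ => ?_
    rw [Finset.sum_eq_single l]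
    · rw [Polynomial.coeff_X_pow, if_pos rfl, Matrix.transpose_one, mul_one]
    · intro b _ hb
      simp [Polynomial.coeff_X_pow, hb]
    · intro h
      exact absurd (Finset.self_mem_range_succ l) h
  rw [hXl, Finset.sum_mul]
  exact Finset.sum_congr rfl fun k _ => (mul_assoc _ _ _).symm

end derived

section derived2
variable {p : ℕ} (θ : ℕ) (W : ℝ → Matrix (Fin p) (Fin p) ℝ)
  (hWint : ∀ (k : ℕ) (i j : Fin p), Integrable fun x : ℝ => x ^ k * W x i j)

include hWint in
lemma bform_Xi_sub (α i : ℕ) (g h : Polynomial (Matrix (Fin p) (Fin p) ℝ)) :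
    bform θ W α (X ^ i) (g - h) = bform θ W α (X ^ i) g - bform θ W α (X ^ i) h := by
  set M := max g.natDegree h.natDegree + 1 with hMdef
  have hg : g.natDegree < M := Nat.lt_succ_of_le (le_max_left _ _)
  have hh : h.natDegree < M := Nat.lt_succ_of_le (le_max_right _ _)
  have hgh : (g - h).natDegree < M := Nat.lt_succ_of_le (Polynomial.natDegree_sub_le g h)
  rw [bform_Xi θ W hWint α i _ hgh, bform_Xi θ W hWint α i g hg, bform_Xi θ W hWint α i h hh,
    ← Finset.sum_sub_distrib]
  exact Finset.sum_congr rfl fun l _ => by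
    rw [Polynomial.coeff_sub, Matrix.transpose_sub, mul_sub]

end derived2

set_option maxHeartbeats 1000000 in
/-- Christoffel transformation for the Q-family:
`x·Q_n^{(α+θ)} = Q_{n+1}^{(α)} + q_{n+1}^{(α)}·Q_n^{(α)}` with
`(q_{n+1}^{(α)})ᵀ = (H_n^{(α)})⁻¹·H_n^{(α+θ)}`. -/
theorem statement9
    (p θ : ℕ) (hp : 1 ≤ p) (hθ : 1 ≤ θ)
    (W : ℝ → Matrix (Fin p) (Fin p) ℝ)
    (hWmeas : ∀ i j : Fin p, Measurable fun x : ℝ => W x i j)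
    (hWint : ∀ (k : ℕ) (i j : Fin p), Integrable fun x : ℝ => x ^ k * W x i j)
    (hM : ∀ (n α : ℕ), 1 ≤ n → IsUnit (momMat θ W n α))
    (P Q : ℕ → ℕ → Polynomial (Matrix (Fin p) (Fin p) ℝ))
    (hPmonic : ∀ n α : ℕ, MonicDeg (P n α) n)
    (hPorth : ∀ n α : ℕ, ∀ i < n, bform θ W α (P n α) (X ^ i) = 0)
    (hQmonic : ∀ n α : ℕ, MonicDeg (Q n α) n)
    (hQorth : ∀ n α : ℕ, ∀ i < n, bform θ W α (X ^ i) (Q n α) = 0)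
    (H : ℕ → ℕ → Matrix (Fin p) (Fin p) ℝ)
    (hHdef : ∀ n α : ℕ, H n α = bform θ W α (P n α) (X ^ n))
    (hHunit : ∀ n α : ℕ, IsUnit (H n α)) :
    ∀ n α : ℕ,
      (X : Polynomial (Matrix (Fin p) (Fin p) ℝ)) * Q n (α + θ)
        = Q (n + 1) α + C ((Ring.inverse (H n α) * H n (α + θ))ᵀ) * Q n α := by
  have hdQ : ∀ m β : ℕ, (Q m β).natDegree ≤ m :=
    fun m β => Polynomial.natDegree_le_iff_coeff_eq_zero.mpr (hQmonic m β).2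
  have hdP : ∀ m β : ℕ, (P m β).natDegree ≤ m :=
    fun m β => Polynomial.natDegree_le_iff_coeff_eq_zero.mpr (hPmonic m β).2
  have hXnQ : ∀ m β : ℕ, bform θ W β (X ^ m) (Q m β) = H m β := by
    intro m β
    have h1 : bform θ W β (P m β) (Q m β) = bform θ W β (X ^ m) (Q m β) := by
      rw [bform_left_expand θ W hWint β (P m β) (Q m β)
        (Nat.lt_succ_of_le (hdP m β)) (Nat.lt_succ_of_le (hdQ m β))]
      rw [Finset.sum_eq_single m]
      · rw [(hPmonic m β).1, one_mul]
      · intro k hk hkm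
        rw [hQorth m β k
          (lt_of_le_of_ne (Nat.lt_succ_iff.mp (Finset.mem_range.mp hk)) hkm), mul_zero]
      · intro h; exact absurd (Finset.self_mem_range_succ m) h
    have h2 : bform θ W β (P m β) (Q m β) = H m β := by
      rw [bform_right_expand θ W hWint β (P m β) (Q m β)
        (Nat.lt_succ_of_le (hdP m β)) (Nat.lt_succ_of_le (hdQ m β))]
      rw [Finset.sum_eq_single m]
      · rw [(hQmonic m β).1, Matrix.transpose_one, mul_one, hHdef]
      · intro l hl hlm
        rw [hPorth m β l
          (lt_of_le_of_ne (Nat.lt_succ_iff.mp (Finset.mem_range.mp hl)) hlm), zero_mul]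
      · intro h; exact absurd (Finset.self_mem_range_succ m) h
    rw [← h1, h2]
  intro n α
  set A : Matrix (Fin p) (Fin p) ℝ := (Ring.inverse (H n α) * H n (α + θ))ᵀ with hA
  set R : Polynomial (Matrix (Fin p) (Fin p) ℝ) :=
    X * Q n (α + θ) - Q (n + 1) α - C A * Q n α with hRdef
  suffices hR : R = 0 by
    rw [hRdef, sub_sub, sub_eq_zero] at hR
    exact hR
  have hhigh : ∀ k : ℕ, n < k → R.coeff k = 0 := by
    intro k hk
    obtain ⟨m, rfl⟩ : ∃ m, k = m + 1 := ⟨k - 1, by omega⟩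
    rw [hRdef]
    simp only [Polynomial.coeff_sub, Polynomial.coeff_C_mul, Polynomial.coeff_X_mul]
    by_cases hm : m = n
    · subst hm
      rw [(hQmonic m (α + θ)).1, (hQmonic (m + 1) α).1, (hQmonic m α).2 (m + 1) (by omega)]
      simp
    · rw [(hQmonic n (α + θ)).2 m (by omega), (hQmonic (n + 1) α).2 (m + 1) (by omega),
        (hQmonic n α).2 (m + 1) (by omega)]
      simp
  have hdR : R.natDegree < n + 1 :=
    Nat.lt_succ_of_le (Polynomial.natDegree_le_iff_coeff_eq_zero.mpr hhigh)
  have ha : ∀ i : ℕ,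
      bform θ W α (X ^ i) (X * Q n (α + θ)) = bform θ W (α + θ) (X ^ i) (Q n (α + θ)) := by
    intro i
    have hdXQ : (X * Q n (α + θ)).natDegree < n + 2 := by
      have := Polynomial.natDegree_mul_le (p := (X : Polynomial (Matrix (Fin p) (Fin p) ℝ)))
        (q := Q n (α + θ))
      have hX := Polynomial.natDegree_X_le (R := Matrix (Fin p) (Fin p) ℝ)
      have := hdQ n (α + θ)
      omega
    rw [bform_Xi θ W hWint α i (X * Q n (α + θ)) hdXQ,
      bform_Xi θ W hWint (α + θ) i (Q n (α + θ)) (Nat.lt_succ_of_le (hdQ n (α + θ))),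
      Finset.sum_range_succ']
    have h0 : (X * Q n (α + θ)).coeff 0 = 0 := by
      rw [Polynomial.mul_coeff_zero, Polynomial.coeff_X_zero, zero_mul]
    rw [h0]
    simp only [Matrix.transpose_zero, mul_zero, add_zero]
    refine Finset.sum_congr rfl fun l _ => ?_
    rw [Polynomial.coeff_X_mul]
    have he : α + i + (l + 1) * θ = α + θ + i + l * θ := by ring
    rw [he]
  have hb : ∀ i : ℕ,
      bform θ W α (X ^ i) (C A * Q n α) = bform θ W α (X ^ i) (Q n α) * Aᵀ := by
    intro i
    have hd : (C A * Q n α).natDegree < n + 1 :=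
      Nat.lt_succ_of_le (le_trans (Polynomial.natDegree_C_mul_le A (Q n α)) (hdQ n α))
    rw [bform_Xi θ W hWint α i (C A * Q n α) hd,
      bform_Xi θ W hWint α i (Q n α) (Nat.lt_succ_of_le (hdQ n α)), Finset.sum_mul]
    refine Finset.sum_congr rfl fun l _ => ?_
    rw [Polynomial.coeff_C_mul, Matrix.transpose_mul, ← mul_assoc]
  have horth : ∀ i : ℕ, i ≤ n → bform θ W α (X ^ i) R = 0 := by
    intro i hi
    have hsplit : bform θ W α (X ^ i) R
        = bform θ W α (X ^ i) (X * Q n (α + θ)) - bform θ W α (X ^ i) (Q (n + 1) α)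
          - bform θ W α (X ^ i) (C A * Q n α) := by
      rw [hRdef, bform_Xi_sub θ W hWint, bform_Xi_sub θ W hWint]
    rcases lt_or_eq_of_le hi with h | h
    · rw [hsplit, ha i, hb i, hQorth n (α + θ) i h, hQorth (n + 1) α i (by omega),
        hQorth n α i h]
      simp
    · subst h
      rw [hsplit, ha i, hb i, hXnQ i (α + θ), hQorth (i + 1) α i (by omega), hXnQ i α]
      rw [hA, Matrix.transpose_transpose, ← mul_assoc,
        Ring.mul_inverse_cancel _ (hHunit i α), one_mul]
      simp
  have hcoeff : ∀ l : ℕ, l ≤ n → R.coeff l = 0 := by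
    set v : Fin (n + 1) → Matrix (Fin p) (Fin p) ℝ := fun l => (R.coeff (l : ℕ))ᵀ with hv
    have hsys : momMat θ W (n + 1) α *ᵥ v = 0 := by
      funext i
      have h0 := horth (i : ℕ) (Nat.lt_succ_iff.mp i.isLt)
      rw [bform_Xi θ W hWint α (i : ℕ) R hdR, ← Fin.sum_univ_eq_sum_range] at h0
      simp only [Matrix.mulVec, dotProduct, momMat, Matrix.of_apply, Pi.zero_apply]
      exact h0
    have hv0 : v = 0 := by
      obtain ⟨u, hu⟩ := hM (n + 1) α (by omega)
      have h1 : u.inv *ᵥ (momMat θ W (n + 1) α *ᵥ v) = v := by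
        rw [Matrix.mulVec_mulVec, ← hu, u.inv_val, Matrix.one_mulVec]
      rw [hsys, Matrix.mulVec_zero] at h1
      exact h1.symm
    intro l hl
    have h2 := congrFun hv0 ⟨l, by omega⟩
    simp only [hv, Pi.zero_apply] at h2
    exact Matrix.transpose_eq_zero.mp h2
  ext k
  rcases le_or_gt k n with h | h
  · rw [hcoeff k h, Polynomial.coeff_zero]
  · rw [hhigh k h, Polynomial.coeff_zero]
end

section
/- (Discrete non-commutative hungry Toda-II lattice from orthogonality.) Define q_{n+1}^{(α)} := ((H_n^{(α)})^{−1}·H_n^{(α+θ)})^⊤ for n ≥ 0 and e_n^{(α)} := ((H_{n−1}^{(α+1)})^{−1}·H_n^{(α)})^⊤ for n ≥ 1, with e_0^{(α)} := 0. Then for all n ≥ 1 and α ∈ ℕ the discrete non-commutative hungry Toda-II lattice holds: q_{n+1}^{(α)}·e_n^{(α)} = e_n^{(α+θ)}·q_n^{(α+1)} and q_n^{(α+1)} + e_{n−1}^{(α+θ)} = q_n^{(α)} + e_n^{(α)}. -/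
open MeasureTheory Polynomial Matrix Filter

namespace TodaAux

variable {p : ℕ} (θ : ℕ) (W : ℝ → Matrix (Fin p) (Fin p) ℝ)

lemma mpEval_sum (f : Polynomial (Matrix (Fin p) (Fin p) ℝ)) {d : ℕ} (hf : f.natDegree ≤ d)
    (x : ℝ) : mpEval f x = ∑ k ∈ Finset.range (d + 1), x ^ k • f.coeff k := by
  unfold mpEval
  exact Polynomial.sum_over_range' f (by simp) (d + 1) (Nat.lt_succ_of_le hf)

lemma smul_mul3 (a b c : ℝ) (A B C : Matrix (Fin p) (Fin p) ℝ) :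
    (a • A) * (b • B) * (c • C) = (a * b * c) • (A * B * C) := by
  simp only [smul_mul_assoc, mul_smul_comm, smul_smul]
  rw [show c * (b * a) = a * b * c from by ring]

lemma integrable_entry
    (hWint : ∀ (k : ℕ) (i j : Fin p), Integrable fun x : ℝ => x ^ k * W x i j)
    (e : ℕ) (F G : Matrix (Fin p) (Fin p) ℝ) (i j : Fin p) :
    Integrable fun x : ℝ => x ^ e * (F * W x * Gᵀ) i j := by
  have h1 : ∀ x : ℝ, x ^ e * (F * W x * Gᵀ) i j
      = ∑ l, ∑ k, (F i k * G j l) * (x ^ e * W x k l) := by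
    intro x
    simp only [Matrix.mul_apply, Matrix.transpose_apply, Finset.sum_mul, Finset.mul_sum]
    exact Finset.sum_congr rfl fun l _ => Finset.sum_congr rfl fun k _ => by ring
  have h2 : Integrable fun x : ℝ => ∑ l, ∑ k, (F i k * G j l) * (x ^ e * W x k l) :=
    integrable_finset_sum _ fun l _ => integrable_finset_sum _ fun k _ =>
      ((hWint e k l).const_mul _)
  exact h2.congr (Filter.Eventually.of_forall fun x => (h1 x).symm)

lemma integral_entry
    (hWint : ∀ (k : ℕ) (i j : Fin p), Integrable fun x : ℝ => x ^ k * W x i j)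
    (e : ℕ) (F G : Matrix (Fin p) (Fin p) ℝ) (i j : Fin p) :
    ∫ x : ℝ, x ^ e * (F * W x * Gᵀ) i j = (F * mom W e * Gᵀ) i j := by
  have h1 : ∀ x : ℝ, x ^ e * (F * W x * Gᵀ) i j
      = ∑ l, ∑ k, (F i k * G j l) * (x ^ e * W x k l) := by
    intro x
    simp only [Matrix.mul_apply, Matrix.transpose_apply, Finset.sum_mul, Finset.mul_sum]
    exact Finset.sum_congr rfl fun l _ => Finset.sum_congr rfl fun k _ => by ring
  simp only [h1]
  rw [integral_finset_sum _ (fun l _ => integrable_finset_sum _ fun k _ =>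
    ((hWint e k l).const_mul _))]
  calc (∑ l, ∫ x : ℝ, ∑ k, (F i k * G j l) * (x ^ e * W x k l))
      = ∑ l, ∑ k, (F i k * G j l) * mom W e k l := by
        refine Finset.sum_congr rfl fun l _ => ?_
        rw [integral_finset_sum _ (fun k _ => ((hWint e k l).const_mul _))]
        refine Finset.sum_congr rfl fun k _ => ?_
        rw [MeasureTheory.integral_const_mul]
        rfl
    _ = (F * mom W e * Gᵀ) i j := by
        simp only [Matrix.mul_apply, Matrix.transpose_apply, Finset.sum_mul]
        exact Finset.sum_congr rfl fun l _ => Finset.sum_congr rfl fun k _ => by ring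

lemma bform_expand
    (hWint : ∀ (k : ℕ) (i j : Fin p), Integrable fun x : ℝ => x ^ k * W x i j)
    (α : ℕ) (f g : Polynomial (Matrix (Fin p) (Fin p) ℝ)) (df dg : ℕ)
    (hf : f.natDegree ≤ df) (hg : g.natDegree ≤ dg) :
    bform θ W α f g = ∑ i ∈ Finset.range (df + 1), ∑ j ∈ Finset.range (dg + 1),
      f.coeff i * mom W (α + i + θ * j) * (g.coeff j)ᵀ := by
  have key : ∀ x : ℝ, mpEval f x * (x ^ α • W x) * (mpEval g (x ^ θ))ᵀ
      = ∑ i ∈ Finset.range (df + 1), ∑ j ∈ Finset.range (dg + 1),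
          x ^ (α + i + θ * j) • (f.coeff i * W x * (g.coeff j)ᵀ) := by
    intro x
    rw [mpEval_sum f hf x, mpEval_sum g hg (x ^ θ), Matrix.transpose_sum]
    simp only [Matrix.transpose_smul, Finset.sum_mul, Finset.mul_sum]
    rw [Finset.sum_comm]
    refine Finset.sum_congr rfl fun i' _ => Finset.sum_congr rfl fun j' _ => ?_
    rw [smul_mul3]
    congr 1
    rw [← pow_mul, ← pow_add, ← pow_add]
    congr 1
    ring
  ext i j
  show (∫ x : ℝ, (mpEval f x * (x ^ α • W x) * (mpEval g (x ^ θ))ᵀ) i j) = _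
  calc (∫ x : ℝ, (mpEval f x * (x ^ α • W x) * (mpEval g (x ^ θ))ᵀ) i j)
      = ∫ x : ℝ, ∑ i' ∈ Finset.range (df + 1), ∑ j' ∈ Finset.range (dg + 1),
          x ^ (α + i' + θ * j') * ((f.coeff i' * W x * (g.coeff j')ᵀ) i j) := by
        congr 1; funext x
        rw [key x]
        simp [Matrix.sum_apply, Matrix.smul_apply, smul_eq_mul]
    _ = ∑ i' ∈ Finset.range (df + 1), ∑ j' ∈ Finset.range (dg + 1),
          ∫ x : ℝ, x ^ (α + i' + θ * j') * ((f.coeff i' * W x * (g.coeff j')ᵀ) i j) := by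
        rw [integral_finset_sum _ (fun i' _ => integrable_finset_sum _ fun j' _ =>
          integrable_entry W hWint _ _ _ i j)]
        exact Finset.sum_congr rfl fun i' _ =>
          integral_finset_sum _ fun j' _ => integrable_entry W hWint _ _ _ i j
    _ = ∑ i' ∈ Finset.range (df + 1), ∑ j' ∈ Finset.range (dg + 1),
          (f.coeff i' * mom W (α + i' + θ * j') * (g.coeff j')ᵀ) i j := by
        exact Finset.sum_congr rfl fun i' _ => Finset.sum_congr rfl fun j' _ =>
          integral_entry W hWint _ _ _ i j
    _ = _ := by simp [Matrix.sum_apply]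


variable (hWint : ∀ (k : ℕ) (i j : Fin p), Integrable fun x : ℝ => x ^ k * W x i j)
include hWint

lemma bform_X_pow (α : ℕ) (f : Polynomial (Matrix (Fin p) (Fin p) ℝ)) (j : ℕ) :
    bform θ W α f (X ^ j) =
      ∑ i ∈ Finset.range (f.natDegree + 1), f.coeff i * mom W (α + i + θ * j) := by
  rw [bform_expand θ W hWint α f (X ^ j) f.natDegree j le_rfl (Polynomial.natDegree_X_pow_le j)]
  refine Finset.sum_congr rfl fun i _ => ?_
  rw [Finset.sum_eq_single j]
  · simp [Polynomial.coeff_X_pow]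
  · intro b _ hb
    simp [Polynomial.coeff_X_pow, hb]
  · intro hj
    exact absurd (Finset.self_mem_range_succ j) hj

lemma bform_X_pow_left (α : ℕ) (g : Polynomial (Matrix (Fin p) (Fin p) ℝ)) (i : ℕ) :
    bform θ W α (X ^ i) g =
      ∑ j ∈ Finset.range (g.natDegree + 1), mom W (α + i + θ * j) * (g.coeff j)ᵀ := by
  rw [bform_expand θ W hWint α (X ^ i) g i g.natDegree (Polynomial.natDegree_X_pow_le i) le_rfl]
  rw [Finset.sum_comm]
  refine Finset.sum_congr rfl fun j _ => ?_
  rw [Finset.sum_eq_single i]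
  · simp [Polynomial.coeff_X_pow]
  · intro b _ hb
    simp [Polynomial.coeff_X_pow, hb]
  · intro hi
    exact absurd (Finset.self_mem_range_succ i) hi

lemma bform_right_expand (α : ℕ) (f g : Polynomial (Matrix (Fin p) (Fin p) ℝ)) (dg : ℕ)
    (hg : g.natDegree ≤ dg) :
    bform θ W α f g = ∑ j ∈ Finset.range (dg + 1), bform θ W α f (X ^ j) * (g.coeff j)ᵀ := by
  rw [bform_expand θ W hWint α f g f.natDegree dg le_rfl hg, Finset.sum_comm]
  refine Finset.sum_congr rfl fun j _ => ?_
  rw [bform_X_pow θ W hWint α f j, Finset.sum_mul]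

lemma bform_left_expand (α : ℕ) (f g : Polynomial (Matrix (Fin p) (Fin p) ℝ)) (df : ℕ)
    (hf : f.natDegree ≤ df) :
    bform θ W α f g = ∑ i ∈ Finset.range (df + 1), f.coeff i * bform θ W α (X ^ i) g := by
  rw [bform_expand θ W hWint α f g df g.natDegree hf le_rfl]
  refine Finset.sum_congr rfl fun i _ => ?_
  rw [bform_X_pow_left θ W hWint α g i, Finset.mul_sum]
  exact Finset.sum_congr rfl fun j _ => by rw [mul_assoc]

lemma bform_shift1 (α : ℕ) (f g : Polynomial (Matrix (Fin p) (Fin p) ℝ)) :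
    bform θ W (α + 1) f g = bform θ W α (X * f) g := by
  have hd : (X * f).natDegree ≤ f.natDegree + 1 := by
    refine (Polynomial.natDegree_mul_le).trans ?_
    have := Polynomial.natDegree_X_le (R := Matrix (Fin p) (Fin p) ℝ)
    omega
  rw [bform_expand θ W hWint (α + 1) f g f.natDegree g.natDegree le_rfl le_rfl,
    bform_expand θ W hWint α (X * f) g (f.natDegree + 1) g.natDegree hd le_rfl]
  conv_rhs => rw [Finset.sum_range_succ']
  have h0 : ∀ j ∈ Finset.range (g.natDegree + 1),
      (X * f).coeff 0 * mom W (α + 0 + θ * j) * (g.coeff j)ᵀ = 0 := by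
    intro j _
    rw [Polynomial.mul_coeff_zero, Polynomial.coeff_X_zero, zero_mul, zero_mul, zero_mul]
  rw [Finset.sum_eq_zero h0, add_zero]
  refine Finset.sum_congr rfl fun i _ => Finset.sum_congr rfl fun j _ => ?_
  rw [Polynomial.coeff_X_mul]
  have hij : α + 1 + i + θ * j = α + (i + 1) + θ * j := by omega
  rw [hij]

lemma bform_shiftθ (α : ℕ) (f g : Polynomial (Matrix (Fin p) (Fin p) ℝ)) :
    bform θ W (α + θ) f g = bform θ W α f (X * g) := by
  have hd : (X * g).natDegree ≤ g.natDegree + 1 := by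
    refine (Polynomial.natDegree_mul_le).trans ?_
    have := Polynomial.natDegree_X_le (R := Matrix (Fin p) (Fin p) ℝ)
    omega
  rw [bform_expand θ W hWint (α + θ) f g f.natDegree g.natDegree le_rfl le_rfl,
    bform_expand θ W hWint α f (X * g) f.natDegree (g.natDegree + 1) le_rfl hd]
  refine Finset.sum_congr rfl fun i _ => ?_
  conv_rhs => rw [Finset.sum_range_succ']
  have h0 : f.coeff i * mom W (α + i + θ * 0) * ((X * g).coeff 0)ᵀ = 0 := by
    rw [Polynomial.mul_coeff_zero, Polynomial.coeff_X_zero, zero_mul, Matrix.transpose_zero,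
      mul_zero]
  rw [h0, add_zero]
  refine Finset.sum_congr rfl fun j _ => ?_
  rw [Polynomial.coeff_X_mul]
  have hij : α + θ + i + θ * j = α + i + θ * (j + 1) := by ring
  rw [hij]

end TodaAux

open TodaAux

/-- discrete non-commutative hungry Toda-II lattice from
orthogonality, with `q_{n+1}^{(α)} = ((H_n^{(α)})⁻¹·H_n^{(α+θ)})ᵀ` (n ≥ 0),
`e_n^{(α)} = ((H_{n-1}^{(α+1)})⁻¹·H_n^{(α)})ᵀ` (n ≥ 1) and `e_0^{(α)} = 0`. -/
theorem statement12
    (p θ : ℕ) (hp : 1 ≤ p) (hθ : 1 ≤ θ)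
    (W : ℝ → Matrix (Fin p) (Fin p) ℝ)
    (hWmeas : ∀ i j : Fin p, Measurable fun x : ℝ => W x i j)
    (hWint : ∀ (k : ℕ) (i j : Fin p), Integrable fun x : ℝ => x ^ k * W x i j)
    (hM : ∀ (n α : ℕ), 1 ≤ n → IsUnit (momMat θ W n α))
    (P Q : ℕ → ℕ → Polynomial (Matrix (Fin p) (Fin p) ℝ))
    (hPmonic : ∀ n α : ℕ, MonicDeg (P n α) n)
    (hPorth : ∀ n α : ℕ, ∀ i < n, bform θ W α (P n α) (X ^ i) = 0)
    (hQmonic : ∀ n α : ℕ, MonicDeg (Q n α) n)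
    (hQorth : ∀ n α : ℕ, ∀ i < n, bform θ W α (X ^ i) (Q n α) = 0)
    (H : ℕ → ℕ → Matrix (Fin p) (Fin p) ℝ)
    (hHdef : ∀ n α : ℕ, H n α = bform θ W α (P n α) (X ^ n))
    (hHunit : ∀ n α : ℕ, IsUnit (H n α))
    (q e : ℕ → ℕ → Matrix (Fin p) (Fin p) ℝ)
    (hq : ∀ n α : ℕ, q (n + 1) α = (Ring.inverse (H n α) * H n (α + θ))ᵀ)
    (he0 : ∀ α : ℕ, e 0 α = 0)
    (he : ∀ n α : ℕ, e (n + 1) α = (Ring.inverse (H n (α + 1)) * H (n + 1) α)ᵀ) :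
    ∀ n : ℕ, 1 ≤ n → ∀ α : ℕ,
      q (n + 1) α * e n α = e n (α + θ) * q n (α + 1) ∧
      q n (α + 1) + e (n - 1) (α + θ) = q n α + e n α := by
  -- degree bounds
  have hdeg : ∀ (f : Polynomial (Matrix (Fin p) (Fin p) ℝ)) (n : ℕ), MonicDeg f n →
      f.natDegree ≤ n := fun f n hf => Polynomial.natDegree_le_iff_coeff_eq_zero.mpr hf.2
  have hPd : ∀ n β : ℕ, (P n β).natDegree ≤ n := fun n β => hdeg _ _ (hPmonic n β)
  have hQd : ∀ n β : ℕ, (Q n β).natDegree ≤ n := fun n β => hdeg _ _ (hQmonic n β)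
  have hXP : ∀ m β : ℕ, MonicDeg (X * P m β) (m + 1) := by
    intro m β
    constructor
    · rw [Polynomial.coeff_X_mul]; exact (hPmonic m β).1
    · intro k hk
      match k, hk with
      | k' + 1, hk => rw [Polynomial.coeff_X_mul]; exact (hPmonic m β).2 k' (by omega)
  -- H via Q
  have hH' : ∀ n β : ℕ, bform θ W β (X ^ n) (Q n β) = H n β := by
    intro n β
    have h1 : bform θ W β (P n β) (Q n β) = bform θ W β (X ^ n) (Q n β) := by
      rw [bform_left_expand θ W hWint β (P n β) (Q n β) n (hPd n β), Finset.sum_range_succ,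
        Finset.sum_eq_zero (fun i hi => by
          rw [hQorth n β i (Finset.mem_range.mp hi), mul_zero]),
        zero_add, (hPmonic n β).1, one_mul]
    have h2 : bform θ W β (P n β) (Q n β) = H n β := by
      rw [bform_right_expand θ W hWint β (P n β) (Q n β) n (hQd n β), Finset.sum_range_succ,
        Finset.sum_eq_zero (fun j hj => by
          rw [hPorth n β j (Finset.mem_range.mp hj), zero_mul]),
        zero_add, (hQmonic n β).1, Matrix.transpose_one, mul_one, hHdef]
    rw [← h1, h2]
  -- any monic of degree n pairs with Q n to H n
  have factA : ∀ (n β : ℕ) (f : Polynomial (Matrix (Fin p) (Fin p) ℝ)), MonicDeg f n →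
      bform θ W β f (Q n β) = H n β := by
    intro n β f hf
    rw [bform_left_expand θ W hWint β f (Q n β) n (hdeg f n hf), Finset.sum_range_succ,
      Finset.sum_eq_zero (fun i hi => by
        rw [hQorth n β i (Finset.mem_range.mp hi), mul_zero]),
      zero_add, hf.1, one_mul]
    exact hH' n β
  -- low degree pairs to zero
  have low : ∀ (n β : ℕ) (f : Polynomial (Matrix (Fin p) (Fin p) ℝ)),
      (∀ k : ℕ, n ≤ k → f.coeff k = 0) → bform θ W β f (Q n β) = 0 := by
    intro n β f hfc
    rw [bform_left_expand θ W hWint β f (Q n β) n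
      (Polynomial.natDegree_le_iff_coeff_eq_zero.mpr fun m hm => hfc m hm.le)]
    refine Finset.sum_eq_zero fun i hi => ?_
    by_cases hlt : i < n
    · rw [hQorth n β i hlt, mul_zero]
    · have : i = n := by have := Finset.mem_range.mp hi; omega
      rw [this, hfc n le_rfl, zero_mul]
  -- key relation K1 (e-relation)
  have K1 : ∀ m β : ℕ, H (m + 1) β
      = H m (β + 1) * ((Q (m + 1) β).coeff m - (Q (m + 1) (β + 1)).coeff m)ᵀ := by
    intro m β
    have expand : ∀ g : Polynomial (Matrix (Fin p) (Fin p) ℝ), g.natDegree ≤ m + 1 →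
        g.coeff (m + 1) = 1 →
        bform θ W (β + 1) (P m (β + 1)) g
          = H m (β + 1) * (g.coeff m)ᵀ + bform θ W (β + 1) (P m (β + 1)) (X ^ (m + 1)) := by
      intro g hgd hgc
      rw [bform_right_expand θ W hWint (β + 1) (P m (β + 1)) g (m + 1) hgd,
        Finset.sum_range_succ, Finset.sum_range_succ,
        Finset.sum_eq_zero (fun j hj => by
          rw [hPorth m (β + 1) j (Finset.mem_range.mp hj), zero_mul]),
        zero_add, hgc, Matrix.transpose_one, mul_one, hHdef m (β + 1)]
    have e1 := expand (Q (m + 1) β) (hQd _ _) (hQmonic (m + 1) β).1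
    have e2 := expand (Q (m + 1) (β + 1)) (hQd _ _) (hQmonic (m + 1) (β + 1)).1
    have e3 : bform θ W (β + 1) (P m (β + 1)) (Q (m + 1) β) = H (m + 1) β := by
      rw [bform_shift1 θ W hWint β (P m (β + 1)) (Q (m + 1) β)]
      exact factA (m + 1) β (X * P m (β + 1)) (hXP m (β + 1))
    have e4 : bform θ W (β + 1) (P m (β + 1)) (Q (m + 1) (β + 1)) = 0 :=
      low (m + 1) (β + 1) _ (fun k hk => (hPmonic m (β + 1)).2 k (by omega))
    rw [e3] at e1
    rw [e4] at e2
    rw [Matrix.transpose_sub, mul_sub, e1]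
    have : bform θ W (β + 1) (P m (β + 1)) (X ^ (m + 1))
        = -(H m (β + 1) * ((Q (m + 1) (β + 1)).coeff m)ᵀ) := by
      rw [eq_neg_iff_add_eq_zero, add_comm]
      exact e2.symm
    rw [this]
    abel
  -- key relation K2 (q-relation)
  have K2 : ∀ m β : ℕ, H m (β + θ)
      = H m β * ((X * Q m (β + θ)).coeff m - (Q (m + 1) β).coeff m)ᵀ := by
    intro m β
    have expand : ∀ g : Polynomial (Matrix (Fin p) (Fin p) ℝ), g.natDegree ≤ m + 1 →
        g.coeff (m + 1) = 1 →
        bform θ W β (P m β) g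
          = H m β * (g.coeff m)ᵀ + bform θ W β (P m β) (X ^ (m + 1)) := by
      intro g hgd hgc
      rw [bform_right_expand θ W hWint β (P m β) g (m + 1) hgd,
        Finset.sum_range_succ, Finset.sum_range_succ,
        Finset.sum_eq_zero (fun j hj => by
          rw [hPorth m β j (Finset.mem_range.mp hj), zero_mul]),
        zero_add, hgc, Matrix.transpose_one, mul_one, hHdef m β]
    have hXQd : (X * Q m (β + θ)).natDegree ≤ m + 1 :=
      calc (X * Q m (β + θ)).natDegree ≤ X.natDegree + (Q m (β + θ)).natDegree :=
            Polynomial.natDegree_mul_le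
        _ ≤ 1 + m := add_le_add Polynomial.natDegree_X_le (hQd m (β + θ))
        _ = m + 1 := Nat.add_comm _ _
    have hXQc : (X * Q m (β + θ)).coeff (m + 1) = 1 := by
      rw [Polynomial.coeff_X_mul]; exact (hQmonic m (β + θ)).1
    have e1 := expand (X * Q m (β + θ)) hXQd hXQc
    have e2 := expand (Q (m + 1) β) (hQd _ _) (hQmonic (m + 1) β).1
    have e3 : bform θ W β (P m β) (X * Q m (β + θ)) = H m (β + θ) := by
      rw [← bform_shiftθ θ W hWint β (P m β) (Q m (β + θ))]
      exact factA m (β + θ) (P m β) (hPmonic m β)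
    have e4 : bform θ W β (P m β) (Q (m + 1) β) = 0 :=
      low (m + 1) β _ (fun k hk => (hPmonic m β).2 k (by omega))
    rw [e3] at e1
    rw [e4] at e2
    rw [Matrix.transpose_sub, mul_sub, e1]
    have : bform θ W β (P m β) (X ^ (m + 1))
        = -(H m β * ((Q (m + 1) β).coeff m)ᵀ) := by
      rw [eq_neg_iff_add_eq_zero, add_comm]
      exact e2.symm
    rw [this]
    abel
  -- explicit coefficient formulas
  have hq' : ∀ m β : ℕ, q (m + 1) β
      = (X * Q m (β + θ)).coeff m - (X * Q (m + 1) β).coeff (m + 1) := by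
    intro m β
    rw [hq m β, K2 m β, Ring.inverse_mul_cancel_left _ _ (hHunit m β),
      Matrix.transpose_transpose, Polynomial.coeff_X_mul]
  have he' : ∀ n β : ℕ, e n β
      = (X * Q n β).coeff n - (X * Q n (β + 1)).coeff n := by
    intro n β
    match n with
    | 0 =>
      rw [he0 β]
      simp [Polynomial.mul_coeff_zero, Polynomial.coeff_X_zero]
    | m + 1 =>
      rw [he m β, K1 m β, Ring.inverse_mul_cancel_left _ _ (hHunit m (β + 1)),
        Matrix.transpose_transpose, Polynomial.coeff_X_mul, Polynomial.coeff_X_mul]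
  -- main goals
  intro n hn α
  obtain ⟨m, rfl⟩ : ∃ m, n = m + 1 := ⟨n - 1, by omega⟩
  constructor
  · -- Toda product relation
    rw [hq (m + 1) α, he m α, he m (α + θ), hq m (α + 1), ← Matrix.transpose_mul,
      ← Matrix.transpose_mul]
    have cancel : ∀ A B C : Matrix (Fin p) (Fin p) ℝ, IsUnit B →
        (A * B) * (Ring.inverse B * C) = A * C := by
      intro A B C hB
      rw [mul_assoc, ← mul_assoc B, Ring.mul_inverse_cancel B hB, one_mul]
    rw [cancel _ _ _ (hHunit (m + 1) α)]
    have hc : α + 1 + θ = α + θ + 1 := by omega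
    rw [hc, cancel _ _ _ (hHunit m (α + θ + 1))]
  · -- Toda sum relation
    simp only [Nat.add_sub_cancel]
    rw [hq' m (α + 1), hq' m α, he' (m + 1) α, he' m (α + θ)]
    have hc : α + 1 + θ = α + θ + 1 := by omega
    rw [hc]
    abel
end

section
/- (Bilinear form of the discrete non-commutative hungry Toda lattice.) Let p ≥ 1, θ ≥ 1 be integers and let H_n^{(α)} be invertible p×p real matrices for all n ∈ ℕ and α ∈ ℕ. Define q_{n+1}^{(α)} := ((H_n^{(α)})^{−1}·H_n^{(α+θ)})^⊤ for n ≥ 0, e_n^{(α)} := ((H_{n−1}^{(α+1)})^{−1}·H_n^{(α)})^⊤ for n ≥ 1, and e_0^{(α)} := 0. Then: (i) the equation q_{n+1}^{(α)}·e_n^{(α)} = e_n^{(α+θ)}·q_n^{(α+1)} holds identically for all n ≥ 1 and α ∈ ℕ; and (ii) the equations q_n^{(α+1)} + e_{n−1}^{(α+θ)} = q_n^{(α)} + e_n^{(α)} hold for all n ≥ 1 and α ∈ ℕ if and only if for all α ∈ ℕ one has H_1^{(α)} = H_0^{(α+θ+1)} − H_0^{(α+1)}·(H_0^{(α)})^{−1}·H_0^{(α+θ)}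 and, for all n ≥ 1, H_{n+1}^{(α)} = H_n^{(α+θ+1)} + H_n^{(α+1)}·((H_{n−1}^{(α+θ+1)})^{−1} − (H_n^{(α)})^{−1})·H_n^{(α+θ)}. -/
open Matrix

variable {p : ℕ}

lemma cancelIff (A X Y : Matrix (Fin p) (Fin p) ℝ) (hA : IsUnit A) :
    X = Y ↔ A * X = A * Y :=
  ⟨fun h => by rw [h], fun h => hA.mul_left_cancel h⟩

lemma helper2 (A B B' C D E : Matrix (Fin p) (Fin p) ℝ)
    (hA : IsUnit A) :
    ((Ring.inverse A * C)ᵀ + (Ring.inverse B' * D)ᵀ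
      = (Ring.inverse B * D)ᵀ + (Ring.inverse A * E)ᵀ)
    ↔ E = C + A * (Ring.inverse B' - Ring.inverse B) * D := by
  rw [← transpose_add, ← transpose_add, transpose_inj,
      cancelIff A _ _ hA, mul_add, mul_add,
      Ring.mul_inverse_cancel_left _ _ hA, Ring.mul_inverse_cancel_left _ _ hA,
      ← mul_assoc, ← mul_assoc, mul_sub, sub_mul]
  constructor
  · intro h
    have h2 := eq_sub_of_add_eq ((add_comm _ _).trans h.symm)
    rw [h2]; abel
  · intro h; rw [h]; abel

lemma helper1 (A B C D E : Matrix (Fin p) (Fin p) ℝ)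
    (hA : IsUnit A) :
    ((Ring.inverse A * C)ᵀ + 0
      = (Ring.inverse B * D)ᵀ + (Ring.inverse A * E)ᵀ)
    ↔ E = C - A * Ring.inverse B * D := by
  rw [add_zero, ← transpose_add, transpose_inj, cancelIff A _ _ hA,
      mul_add, Ring.mul_inverse_cancel_left _ _ hA,
      Ring.mul_inverse_cancel_left _ _ hA, ← mul_assoc]
  constructor
  · intro h; rw [h]; abel
  · intro h; rw [h]; abel


/-- bilinear form of the discrete non-commutative hungry Toda
lattice. With `q_{n+1}^{(α)} = ((H_n^{(α)})⁻¹·H_n^{(α+θ)})ᵀ`,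
`e_n^{(α)} = ((H_{n-1}^{(α+1)})⁻¹·H_n^{(α)})ᵀ` (n ≥ 1) and `e_0^{(α)} = 0`:
(i) the first Toda-II equation holds identically, and (ii) the second family of
Toda-II equations is equivalent to the bilinear equations for `H`. -/
theorem statement13 (p θ : ℕ) (hp : 1 ≤ p) (hθ : 1 ≤ θ)
    (H : ℕ → ℕ → Matrix (Fin p) (Fin p) ℝ)
    (hHunit : ∀ n α : ℕ, IsUnit (H n α))
    (q e : ℕ → ℕ → Matrix (Fin p) (Fin p) ℝ)
    (hq : ∀ n α : ℕ, q (n + 1) α = (Ring.inverse (H n α) * H n (α + θ))ᵀ)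
    (he0 : ∀ α : ℕ, e 0 α = 0)
    (he : ∀ n α : ℕ, e (n + 1) α = (Ring.inverse (H n (α + 1)) * H (n + 1) α)ᵀ) :
    (∀ n : ℕ, 1 ≤ n → ∀ α : ℕ,
        q (n + 1) α * e n α = e n (α + θ) * q n (α + 1)) ∧
    ((∀ n : ℕ, 1 ≤ n → ∀ α : ℕ,
        q n (α + 1) + e (n - 1) (α + θ) = q n α + e n α) ↔
      (∀ α : ℕ,
        H 1 α = H 0 (α + θ + 1)
            - H 0 (α + 1) * Ring.inverse (H 0 α) * H 0 (α + θ) ∧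
        ∀ n : ℕ, 1 ≤ n →
          H (n + 1) α = H n (α + θ + 1)
              + H n (α + 1)
                * (Ring.inverse (H (n - 1) (α + θ + 1)) - Ring.inverse (H n α))
                * H n (α + θ))) := by
  have hcl : ∀ (n α : ℕ) (Y : Matrix (Fin p) (Fin p) ℝ),
      H n α * (Ring.inverse (H n α) * Y) = Y :=
    fun n α Y => Ring.mul_inverse_cancel_left _ _ (hHunit n α)
  constructor
  · -- part (i)
    intro n hn α
    obtain ⟨m, rfl⟩ : ∃ m, n = m + 1 := ⟨n - 1, by omega⟩
    have hidx : α + 1 + θ = α + θ + 1 := by omega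
    rw [hq, he, he, hq, ← transpose_mul, ← transpose_mul, hidx]
    congr 1
    rw [mul_assoc, hcl, mul_assoc, hcl]
  · constructor
    · intro h α
      have hidx : α + 1 + θ = α + θ + 1 := by omega
      constructor
      · have h1 := h 1 le_rfl α
        rw [hq, hq, he, he0, hidx] at h1
        exact (helper1 _ _ _ _ _ (hHunit 0 (α + 1))).mp h1
      · intro n hn
        obtain ⟨m, rfl⟩ : ∃ m, n = m + 1 := ⟨n - 1, by omega⟩
        have h2 := h (m + 2) (by omega) α
        simp only [show m + 2 - 1 = m + 1 from rfl] at h2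
        simp only [Nat.add_sub_cancel]
        rw [hq, hq, he, he, hidx] at h2
        exact (helper2 _ _ _ _ _ _ (hHunit (m + 1) (α + 1))).mp h2
    · intro h n hn α
      have hidx : α + 1 + θ = α + θ + 1 := by omega
      obtain ⟨m, rfl⟩ : ∃ m, n = m + 1 := ⟨n - 1, by omega⟩
      simp only [Nat.add_sub_cancel]
      cases m with
      | zero =>
        rw [hq, hq, he, he0, hidx]
        exact (helper1 _ _ _ _ _ (hHunit 0 (α + 1))).mpr (h α).1
      | succ m =>
        have h2 := (h α).2 (m + 1) (by omega)
        simp only [Nat.add_sub_cancel] at h2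
        rw [hq, hq, he, he, hidx]
        exact (helper2 _ _ _ _ _ _ (hHunit (m + 1) (α + 1))).mpr h2
end

section
/- (Compatibility as a block matrix identity.) For each α ∈ ℕ, the discrete non-commutative hungry Toda-II lattice equations with zero boundary conditions hold at step α if and only if the np×np matrix identity R_n^{(α)}·L_n^{(α)} = L_n^{(α+θ)}·R_n^{(α+1)} holds. -/
open Matrix Filter

/-- The block upper bidiagonal matrix `R_n^{(α)}`: diagonal blocks
`q_1^{(α)}, …, q_n^{(α)}`, superdiagonal blocks `I_p`, zero elsewhere,
realized as an `np × np` real matrix indexed by `Fin n × Fin p`. -/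
def blkR (p n : ℕ) (q : ℕ → ℕ → Matrix (Fin p) (Fin p) ℝ) (α : ℕ) :
    Matrix (Fin n × Fin p) (Fin n × Fin p) ℝ :=
  Matrix.of fun u v =>
    if u.1 = v.1 then q ((u.1 : ℕ) + 1) α u.2 v.2
    else if (v.1 : ℕ) = (u.1 : ℕ) + 1 then (if u.2 = v.2 then 1 else 0) else 0

/-- The block lower bidiagonal matrix `L_n^{(α)}`: diagonal blocks `I_p`,
subdiagonal blocks `e_1^{(α)}, …, e_{n-1}^{(α)}`, zero elsewhere. -/
def blkL (p n : ℕ) (e : ℕ → ℕ → Matrix (Fin p) (Fin p) ℝ) (α : ℕ) :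
    Matrix (Fin n × Fin p) (Fin n × Fin p) ℝ :=
  Matrix.of fun u v =>
    if u.1 = v.1 then (if u.2 = v.2 then 1 else 0)
    else if (u.1 : ℕ) = (v.1 : ℕ) + 1 then e (u.1 : ℕ) α u.2 v.2 else 0

/-- The discrete non-commutative hungry Toda-II lattice with zero boundary
conditions, at time step `α`. -/
def TodaStep (p θ : ℕ) (q e : ℕ → ℕ → Matrix (Fin p) (Fin p) ℝ) (n α : ℕ) : Prop :=
  (∀ m : ℕ, 1 ≤ m → m ≤ n → q m (α + 1) + e (m - 1) (α + θ) = q m α + e m α) ∧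
  (∀ m : ℕ, 1 ≤ m → m ≤ n - 1 → e m (α + θ) * q m (α + 1) = q (m + 1) α * e m α)

/-- The block Hessenberg matrix
`J_n^{(α)} = L_n^{(α)} · L_n^{(α+1)} ⋯ L_n^{(α+θ-1)} · R_n^{(α)}`. -/
def blkJ (p n θ : ℕ) (q e : ℕ → ℕ → Matrix (Fin p) (Fin p) ℝ) (α : ℕ) :
    Matrix (Fin n × Fin p) (Fin n × Fin p) ℝ :=
  ((List.range θ).map fun i => blkL p n e (α + i)).prod * blkR p n q α

/-!
Reading an `np × np` matrix as an `n × n` matrix of `p × p` blocks (`Matrix.compRingEquiv`)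
turns the claim into one about bidiagonal matrices over the noncommutative ring of blocks.
Writing `q' = q^{(α+1)}` and `e' = e^{(α+θ)}`, both `R L` and `L' R'` are tridiagonal with
identity blocks on the superdiagonal; their diagonal blocks are `q_m + e_m` and
`q'_m + e'_{m-1}`, their subdiagonal blocks `q_{m+1} e_m` and `e'_m q'_m`, where the zero
boundary blocks `e_n = 0` and `e'_0 = 0` are exactly what makes the first and last rows fit
the pattern. Comparing blocks gives the lattice equations.
-/

section

variable {A : Type*} [Ring A] {n : ℕ}

theorem Fin.sum_ite_val_eq (m : ℕ) (f : Fin n → A) :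
    ∑ k : Fin n, (if (k : ℕ) = m then f k else 0) = if h : m < n then f ⟨m, h⟩ else 0 := by
  split_ifs with h
  · rw [Finset.sum_eq_single_of_mem (⟨m, h⟩ : Fin n) (Finset.mem_univ _)]
    · simp
    · intro k _ hk; exact if_neg fun hkm => hk (Fin.ext hkm)
  · exact Finset.sum_eq_zero fun k _ => if_neg (by omega)

namespace Matrix

def upperBidiag (n : ℕ) (d : ℕ → A) : Matrix (Fin n) (Fin n) A :=
  of fun i j => if i = j then d (i + 1) else if (j : ℕ) = i + 1 then 1 else 0

def lowerBidiag (n : ℕ) (s : ℕ → A) : Matrix (Fin n) (Fin n) A :=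
  of fun i j => if i = j then 1 else if (i : ℕ) = j + 1 then s i else 0

def unitTridiag (n : ℕ) (a b : ℕ → A) : Matrix (Fin n) (Fin n) A :=
  of fun i j => if i = j then a i else if (i : ℕ) = j + 1 then b i
    else if (j : ℕ) = i + 1 then 1 else 0

theorem unitTridiag_inj {a b a' b' : ℕ → A} :
    unitTridiag n a b = unitTridiag n a' b' ↔
      (∀ i < n, a i = a' i) ∧ (∀ i, 1 ≤ i → i < n → b i = b' i) := by
  constructor
  · intro h
    refine ⟨fun i hi => by simpa [unitTridiag] using congr_fun₂ h ⟨i, hi⟩ ⟨i, hi⟩,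
      fun i hi₁ hi => ?_⟩
    let j : Fin n := ⟨i - 1, by omega⟩
    have hne : (⟨i, hi⟩ : Fin n) ≠ j := by simp [j, Fin.ext_iff]; omega
    have hsub : i = (j : ℕ) + 1 := by simp [j]; omega
    simpa only [unitTridiag, of_apply, if_neg hne, if_pos hsub] using congr_fun₂ h ⟨i, hi⟩ j
  · rintro ⟨ha, hb⟩
    ext i j
    simp only [unitTridiag, of_apply]
    split_ifs with h₁ h₂
    · exact ha i i.2
    · exact hb i (by omega) i.2
    all_goals rfl

theorem upperBidiag_mul_lowerBidiag (d s : ℕ → A) (hs : s n = 0) :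
    upperBidiag n d * lowerBidiag n s =
      unitTridiag n (fun i => d (i + 1) + s (i + 1)) (fun i => d (i + 1) * s i) := by
  ext i j
  have hU : ∀ k, upperBidiag n d i k =
      (if k = i then d (i + 1) else 0) + (if (k : ℕ) = i + 1 then 1 else 0) := by
    intro k
    simp only [upperBidiag, of_apply, Fin.ext_iff]
    split_ifs <;> first | omega | simp
  simp only [mul_apply, hU, add_mul, ite_mul, zero_mul, one_mul, Finset.sum_add_distrib,
    Finset.sum_ite_eq', Finset.mem_univ, if_true, Fin.sum_ite_val_eq]
  simp only [lowerBidiag, unitTridiag, of_apply, Fin.ext_iff]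
  split_ifs <;> first | omega | simp [show (i : ℕ) + 1 = n by omega, hs] | simp

theorem lowerBidiag_mul_upperBidiag (d s : ℕ → A) (hs : s 0 = 0) :
    lowerBidiag n s * upperBidiag n d =
      unitTridiag n (fun i => d (i + 1) + s i) (fun i => s i * d i) := by
  ext i j
  -- in row `0` the index `i - 1` truncates to `0`; the term it adds vanishes as `s 0 = 0`
  have hL : ∀ k, lowerBidiag n s i k =
      (if k = i then 1 else 0) + (if (k : ℕ) = i - 1 then s i else 0) := by
    intro k
    simp only [lowerBidiag, of_apply, Fin.ext_iff]
    split_ifs <;> first | omega | simp [show (i : ℕ) = 0 by omega, hs] | simp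
  simp only [mul_apply, hL, add_mul, ite_mul, zero_mul, one_mul, Finset.sum_add_distrib,
    Finset.sum_ite_eq', Finset.mem_univ, if_true, Fin.sum_ite_val_eq]
  simp only [upperBidiag, unitTridiag, of_apply, Fin.ext_iff]
  split_ifs <;> first
    | omega
    | simp [show (i : ℕ) = 0 by omega, hs]
    | simp [show (i : ℕ) - 1 + 1 = i by omega]
    | simp

theorem upperBidiag_mul_lowerBidiag_eq_iff {d d' s s' : ℕ → A} (hs : s n = 0) (hs' : s' 0 = 0) :
    upperBidiag n d * lowerBidiag n s = lowerBidiag n s' * upperBidiag n d' ↔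
      (∀ m, 1 ≤ m → m ≤ n → d' m + s' (m - 1) = d m + s m) ∧
      (∀ m, 1 ≤ m → m ≤ n - 1 → s' m * d' m = d (m + 1) * s m) := by
  rw [upperBidiag_mul_lowerBidiag d s hs, lowerBidiag_mul_upperBidiag d' s' hs', unitTridiag_inj]
  refine and_congr ⟨fun h m hm₁ hm => ?_, fun h i hi => ?_⟩
    ⟨fun h m hm₁ hm => (h m hm₁ (by omega)).symm, fun h i hi₁ hi => (h i hi₁ (by omega)).symm⟩
  · obtain ⟨i, rfl⟩ : ∃ i, m = i + 1 := ⟨m - 1, by omega⟩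
    simpa using (h i (by omega)).symm
  · simpa using (h (i + 1) (by omega) hi).symm

end Matrix

end

theorem blkR_eq_compRingEquiv {n : ℕ} (p : ℕ) (q : ℕ → ℕ → Matrix (Fin p) (Fin p) ℝ) (α : ℕ) :
    blkR p n q α = compRingEquiv (Fin n) (Fin p) ℝ (upperBidiag n (q · α)) := by
  ext u v
  simp only [blkR, upperBidiag, compRingEquiv_apply, comp_apply, of_apply]
  split_ifs <;> simp_all [one_apply]

theorem blkL_eq_compRingEquiv {n : ℕ} (p : ℕ) (e : ℕ → ℕ → Matrix (Fin p) (Fin p) ℝ) (α : ℕ) :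
    blkL p n e α = compRingEquiv (Fin n) (Fin p) ℝ (lowerBidiag n (e · α)) := by
  ext u v
  simp only [blkL, lowerBidiag, compRingEquiv_apply, comp_apply, of_apply]
  split_ifs <;> simp_all [one_apply]

theorem statement14_general (p n θ : ℕ)
    (q e : ℕ → ℕ → Matrix (Fin p) (Fin p) ℝ)
    (hbd : ∀ α : ℕ, e 0 α = 0 ∧ e n α = 0)
    (α : ℕ) :
    TodaStep p θ q e n α ↔
      blkR p n q α * blkL p n e α = blkL p n e (α + θ) * blkR p n q (α + 1) := by
  rw [blkR_eq_compRingEquiv, blkR_eq_compRingEquiv, blkL_eq_compRingEquiv,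
    blkL_eq_compRingEquiv, ← map_mul, ← map_mul,
    (compRingEquiv _ _ _).injective.eq_iff,
    upperBidiag_mul_lowerBidiag_eq_iff (s := (e · α)) (s' := (e · (α + θ)))
      (hbd α).2 (hbd (α + θ)).1]
  rfl

/-- the hungry Toda-II lattice equations with zero boundary
conditions at step `α` hold iff `R_n^{(α)}·L_n^{(α)} = L_n^{(α+θ)}·R_n^{(α+1)}`. -/
theorem statement14 (p n θ : ℕ) (hp : 1 ≤ p) (hn : 1 ≤ n) (hθ : 1 ≤ θ)
    (q e : ℕ → ℕ → Matrix (Fin p) (Fin p) ℝ)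
    (hbd : ∀ α : ℕ, e 0 α = 0 ∧ e n α = 0)
    (α : ℕ) :
    TodaStep p θ q e n α ↔
      blkR p n q α * blkL p n e α = blkL p n e (α + θ) * blkR p n q (α + 1) :=
  statement14_general p n θ q e hbd α
end

section
/- (Generalized block LR transformation and isospectrality.) Suppose R_n^{(α)}·L_n^{(α)} = L_n^{(α+θ)}·R_n^{(α+1)} holds for all α ∈ ℕ. Then each L_n^{(α)} is invertible, and for all α ∈ ℕ: J_n^{(α+1)} = (L_n^{(α)})^{−1}·J_n^{(α)}·L_n^{(α)}, and J_n^{(α+θ)} = R_n^{(α)}·L_n^{(α)}·L_n^{(α+1)}⋯L_n^{(α+θ−1)}. In particular, all the matrices J_n^{(α)}, α ∈ ℕ, are similar to J_n^{(0)} and have the same characteristic polynomial. -/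
open Matrix Filter

open Polynomial in
/-- Similar matrices have equal characteristic polynomials. -/
lemma charpoly_conj_aux {m : Type*} [Fintype m] [DecidableEq m]
    (S A : Matrix m m ℝ) (hS : IsUnit S) :
    (S⁻¹ * A * S).charpoly = A.charpoly := by
  have hdet : IsUnit S.det := (Matrix.isUnit_iff_isUnit_det S).1 hS
  have hinv : S⁻¹ * S = 1 := Matrix.nonsing_inv_mul S hdet
  have hTT : (S⁻¹).map (C : ℝ →+* ℝ[X]) * S.map (C : ℝ →+* ℝ[X]) = 1 := by
    rw [← Matrix.map_mul, hinv, Matrix.map_one _ (map_zero _) (map_one _)]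
  have key : charmatrix (S⁻¹ * A * S)
      = (S⁻¹).map (C : ℝ →+* ℝ[X]) * charmatrix A * S.map (C : ℝ →+* ℝ[X]) := by
    unfold charmatrix
    simp only [RingHom.mapMatrix_apply, Matrix.map_mul]
    rw [mul_sub, sub_mul]
    congr 1
    rw [scalar_apply, ← Matrix.smul_one_eq_diagonal, Matrix.mul_smul, Matrix.smul_mul,
      mul_one, hTT, Matrix.smul_one_eq_diagonal]
  show (charmatrix _).det = (charmatrix _).det
  rw [key, Matrix.det_mul, Matrix.det_mul,
    mul_comm ((S⁻¹.map (C : ℝ →+* ℝ[X])).det * _), ← mul_assoc,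
    mul_comm ((S.map (C : ℝ →+* ℝ[X])).det),
    ← Matrix.det_mul, hTT, Matrix.det_one, one_mul]

lemma blkL_bt (p n : ℕ) (e : ℕ → ℕ → Matrix (Fin p) (Fin p) ℝ) (α : ℕ) :
    (blkL p n e α).BlockTriangular (fun u : Fin n × Fin p => OrderDual.toDual u.1) := by
  intro i j h
  have h' : (i.1 : ℕ) < (j.1 : ℕ) := h
  simp only [blkL, Matrix.of_apply]
  rw [if_neg (by simp [Fin.ext_iff]; omega), if_neg (by omega)]

lemma blkL_det (p n : ℕ) (e : ℕ → ℕ → Matrix (Fin p) (Fin p) ℝ) (α : ℕ) :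
    (blkL p n e α).det = 1 := by
  rw [(blkL_bt p n e α).det]
  refine Finset.prod_eq_one fun a _ => ?_
  have h1 : (blkL p n e α).toSquareBlock (fun u => OrderDual.toDual u.1) a = 1 := by
    ext u v
    have h1 : u.1.1 = v.1.1 := by
      have := u.2.trans v.2.symm
      exact OrderDual.toDual_inj.mp this
    simp [Matrix.toSquareBlock, Matrix.toSquareBlockProp, blkL, Matrix.one_apply,
      h1, Subtype.ext_iff, Prod.ext_iff]
  rw [h1, Matrix.det_one]

lemma blkL_isUnit (p n : ℕ) (e : ℕ → ℕ → Matrix (Fin p) (Fin p) ℝ) (α : ℕ) :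
    IsUnit (blkL p n e α) :=
  (Matrix.isUnit_iff_isUnit_det _).2 (by rw [blkL_det]; exact isUnit_one)

/-- generalized block LR transformation and isospectrality. -/
theorem statement15 (p n θ : ℕ) (hp : 1 ≤ p) (hn : 1 ≤ n) (hθ : 1 ≤ θ)
    (q e : ℕ → ℕ → Matrix (Fin p) (Fin p) ℝ)
    (hbd : ∀ α : ℕ, e 0 α = 0 ∧ e n α = 0)
    (hcompat : ∀ α : ℕ,
      blkR p n q α * blkL p n e α = blkL p n e (α + θ) * blkR p n q (α + 1)) :
    (∀ α : ℕ, IsUnit (blkL p n e α)) ∧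
    (∀ α : ℕ, blkJ p n θ q e (α + 1)
        = (blkL p n e α)⁻¹ * blkJ p n θ q e α * blkL p n e α) ∧
    (∀ α : ℕ, blkJ p n θ q e (α + θ)
        = blkR p n q α * ((List.range θ).map fun i => blkL p n e (α + i)).prod) ∧
    (∀ α : ℕ, ∃ S : Matrix (Fin n × Fin p) (Fin n × Fin p) ℝ,
        IsUnit S ∧ blkJ p n θ q e α = S⁻¹ * blkJ p n θ q e 0 * S ∧
        (blkJ p n θ q e α).charpoly = (blkJ p n θ q e 0).charpoly) := by
  -- abbreviations
  have happ : ∀ α k : ℕ, ((List.range (k + 1)).map fun i => blkL p n e (α + i)).prod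
      = ((List.range k).map fun i => blkL p n e (α + i)).prod * blkL p n e (α + k) := by
    intro α k
    rw [List.range_succ, List.map_append, List.prod_append]
    simp
  have hshift : ∀ α k : ℕ, ((List.range (k + 1)).map fun i => blkL p n e (α + i)).prod
      = blkL p n e α * ((List.range k).map fun i => blkL p n e (α + 1 + i)).prod := by
    intro α k
    rw [List.range_succ_eq_map, List.map_cons, List.prod_cons, List.map_map]
    have hm : List.map ((fun i => blkL p n e (α + i)) ∘ Nat.succ) (List.range k)
        = List.map (fun i => blkL p n e (α + 1 + i)) (List.range k) :=
      List.map_congr_left fun i _ => by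
        show blkL p n e (α + (i + 1)) = blkL p n e (α + 1 + i)
        rw [← Nat.add_assoc, Nat.add_right_comm]
    rw [hm]
    simp only [Nat.add_zero]
  have hmove : ∀ (k α : ℕ),
      blkR p n q α * ((List.range k).map fun i => blkL p n e (α + i)).prod
      = ((List.range k).map fun i => blkL p n e (α + θ + i)).prod * blkR p n q (α + k) := by
    intro k
    induction k with
    | zero => simp
    | succ k ih =>
      intro α
      rw [happ, happ, ← mul_assoc, ih α, mul_assoc, hcompat (α + k), ← mul_assoc]
      have e1 : blkL p n e (α + k + θ) = blkL p n e (α + θ + k) := by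
        rw [Nat.add_right_comm]
      rw [e1]
      rfl
  have hLunit : ∀ α : ℕ, IsUnit (blkL p n e α) := blkL_isUnit p n e
  -- part 2 key identity
  have hkey : ∀ α : ℕ, blkJ p n θ q e α * blkL p n e α
      = blkL p n e α * blkJ p n θ q e (α + 1) := by
    intro α
    have h1 : ((List.range θ).map fun i => blkL p n e (α + i)).prod * blkL p n e (α + θ)
        = blkL p n e α * ((List.range θ).map fun i => blkL p n e (α + 1 + i)).prod := by
      rw [← happ α θ, hshift α θ]
    calc blkJ p n θ q e α * blkL p n e α
        = ((List.range θ).map fun i => blkL p n e (α + i)).prod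
            * (blkR p n q α * blkL p n e α) := by
          rw [blkJ, mul_assoc]
      _ = ((List.range θ).map fun i => blkL p n e (α + i)).prod
            * (blkL p n e (α + θ) * blkR p n q (α + 1)) := by rw [hcompat α]
      _ = (((List.range θ).map fun i => blkL p n e (α + i)).prod * blkL p n e (α + θ))
            * blkR p n q (α + 1) := by rw [mul_assoc]
      _ = blkL p n e α * (((List.range θ).map fun i => blkL p n e (α + 1 + i)).prod
            * blkR p n q (α + 1)) := by rw [h1, mul_assoc]
      _ = blkL p n e α * blkJ p n θ q e (α + 1) := by rw [blkJ]
  have hpart2 : ∀ α : ℕ, blkJ p n θ q e (α + 1)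
      = (blkL p n e α)⁻¹ * blkJ p n θ q e α * blkL p n e α := by
    intro α
    have hdL : IsUnit (blkL p n e α).det :=
      (Matrix.isUnit_iff_isUnit_det _).1 (hLunit α)
    rw [mul_assoc, hkey α, ← mul_assoc, Matrix.nonsing_inv_mul _ hdL, one_mul]
  refine ⟨hLunit, hpart2, fun α => ?_, fun α => ?_⟩
  · -- part 3
    rw [blkJ, ← hmove θ α]
  · -- part 4: induction on α
    induction α with
    | zero =>
      have hinv1 : (1 : Matrix (Fin n × Fin p) (Fin n × Fin p) ℝ)⁻¹ = 1 :=
        Matrix.inv_eq_left_inv (by simp)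
      exact ⟨1, isUnit_one, by rw [hinv1, one_mul, mul_one], rfl⟩
    | succ α ih =>
      obtain ⟨S, hS, hJ, hcp⟩ := ih
      refine ⟨S * blkL p n e α, hS.mul (hLunit α), ?_, ?_⟩
      · rw [Matrix.mul_inv_rev, hpart2 α, hJ]
        noncomm_ring
      · rw [hpart2 α, charpoly_conj_aux _ _ (hLunit α), hcp]
end
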